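/- arXiv:1606.04275 — 10 statements merged into one kernel-verified Lean document; each statement's English description precedes it below -/
import Mathlib

section
/- Let Γ be an n×n symmetric positive semidefinite real matrix, y ∈ ℝⁿ, and λ > 0. Define J(α) = (Γα − y)ᵀ(Γα − y) + λ·αᵀΓα for α ∈ ℝⁿ. Then α* = (Γ + λI)⁻¹ y is a minimizer of J, i.e. J(α*) ≤ J(α) for every α ∈ ℝⁿ. -/
/-!
Expanding the objective around `s` gives
`J(s + β) = J(s) + |Γβ|² + λ βᵀΓβ + 2 (Γβ)ᵀ((Γ + λI)s − y)`.
For `s = (Γ + λI)⁻¹ y` the cross term vanishes, and the remaining two terms are nonnegative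
because `Γ` is positive semidefinite.
-/

open Matrix

variable {ι : Type*} [Fintype ι]

def krrObjective (Γ : Matrix ι ι ℝ) (y : ι → ℝ) (lam : ℝ) (α : ι → ℝ) : ℝ :=
  (Γ *ᵥ α - y) ⬝ᵥ (Γ *ᵥ α - y) + lam * (α ⬝ᵥ (Γ *ᵥ α))

lemma Matrix.IsSymm.dotProduct_mulVec_comm {Γ : Matrix ι ι ℝ} (hΓ : Γ.IsSymm) (u v : ι → ℝ) :
    u ⬝ᵥ (Γ *ᵥ v) = v ⬝ᵥ (Γ *ᵥ u) := by
  rw [dotProduct_mulVec, ← mulVec_transpose, hΓ.eq, dotProduct_comm]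

lemma krrObjective_add {Γ : Matrix ι ι ℝ} (hΓ : Γ.IsSymm) (y : ι → ℝ) (lam : ℝ) (s β : ι → ℝ) :
    krrObjective Γ y lam (s + β) = krrObjective Γ y lam s + krrObjective Γ 0 lam β
      + 2 * ((Γ *ᵥ β) ⬝ᵥ (Γ *ᵥ s + lam • s - y)) := by
  have hsym := hΓ.dotProduct_mulVec_comm s β
  have hcomm := dotProduct_comm (Γ *ᵥ β) s
  simp only [krrObjective, mulVec_add, sub_zero, dotProduct_add, add_dotProduct,
    dotProduct_sub, sub_dotProduct, dotProduct_smul, smul_eq_mul]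
  rw [dotProduct_comm (Γ *ᵥ β) y, dotProduct_comm (Γ *ᵥ β) (Γ *ᵥ s)]
  linear_combination -lam * hsym - 2 * lam * hcomm

lemma krrObjective_zero_nonneg {Γ : Matrix ι ι ℝ} (hΓ : Γ.PosSemidef) {lam : ℝ} (hlam : 0 ≤ lam)
    (β : ι → ℝ) : 0 ≤ krrObjective Γ 0 lam β := by
  have hΓβ : 0 ≤ β ⬝ᵥ (Γ *ᵥ β) := by simpa using hΓ.dotProduct_mulVec_nonneg β
  have hsq : 0 ≤ (Γ *ᵥ β) ⬝ᵥ (Γ *ᵥ β) := Finset.sum_nonneg fun i _ => mul_self_nonneg _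
  simp only [krrObjective, sub_zero]
  positivity

lemma krrObjective_le_of_mulVec_add_smul_eq {Γ : Matrix ι ι ℝ} (hΓ : Γ.PosSemidef) {y : ι → ℝ}
    {lam : ℝ} (hlam : 0 ≤ lam) {s : ι → ℝ} (hs : Γ *ᵥ s + lam • s = y) (α : ι → ℝ) :
    krrObjective Γ y lam s ≤ krrObjective Γ y lam α := by
  have hΓsymm : Γ.IsSymm := isHermitian_iff_isSymm.mp hΓ.isHermitian
  calc krrObjective Γ y lam s
      ≤ krrObjective Γ y lam s + krrObjective Γ 0 lam (α - s) :=
        le_add_of_nonneg_right (krrObjective_zero_nonneg hΓ hlam _)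
    _ = krrObjective Γ y lam (s + (α - s)) := by
        rw [krrObjective_add hΓsymm, hs, sub_self, dotProduct_zero, mul_zero, add_zero]
    _ = krrObjective Γ y lam α := by rw [add_sub_cancel]

lemma mulVec_inv_add_smul_one_mulVec [DecidableEq ι] {Γ : Matrix ι ι ℝ} (hΓ : Γ.PosSemidef)
    {lam : ℝ} (hlam : 0 < lam) (y : ι → ℝ) :
    Γ *ᵥ ((Γ + lam • 1)⁻¹ *ᵥ y) + lam • ((Γ + lam • 1)⁻¹ *ᵥ y) = y := by
  have hA : (Γ + lam • 1).PosDef := PosDef.posSemidef_add hΓ (PosDef.one.smul hlam)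
  have h := mulVec_mulVec y (Γ + lam • 1) (Γ + lam • 1)⁻¹
  rwa [mul_nonsing_inv _ ((isUnit_iff_isUnit_det _).mp hA.isUnit), one_mulVec, add_mulVec,
    smul_mulVec, one_mulVec] at h

/-- `α* = (Γ + λI)⁻¹ y` minimizes
`J(α) = (Γα − y)ᵀ(Γα − y) + λ·αᵀΓα`. -/
theorem two_step_krr_stmt1 {n : ℕ}
    (Γ : Matrix (Fin n) (Fin n) ℝ) (hΓ : Γ.PosSemidef)
    (y : Fin n → ℝ) (lam : ℝ) (hlam : 0 < lam) :
    ∀ α : Fin n → ℝ,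
      (Γ *ᵥ ((Γ + lam • 1)⁻¹ *ᵥ y) - y) ⬝ᵥ (Γ *ᵥ ((Γ + lam • 1)⁻¹ *ᵥ y) - y)
        + lam * (((Γ + lam • 1)⁻¹ *ᵥ y) ⬝ᵥ (Γ *ᵥ ((Γ + lam • 1)⁻¹ *ᵥ y)))
      ≤ (Γ *ᵥ α - y) ⬝ᵥ (Γ *ᵥ α - y) + lam * (α ⬝ᵥ (Γ *ᵥ α)) :=
  krrObjective_le_of_mulVec_add_smul_eq hΓ hlam.le (mulVec_inv_add_smul_one_mulVec hΓ hlam y)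
end

section
/- (Setting A equivalence.) Let K be an m×m and G a q×q symmetric positive definite real matrix, Y ∈ ℝ^{m×q}, and λ_d, λ_t > 0. Define the mq×mq matrix Ξ = (G ⊗ K)(λ_dλ_t I + λ_t (I ⊗ K) + λ_d (G ⊗ I))⁻¹, where ⊗ denotes the Kronecker product; Ξ is invertible. Then the functional J(F) = vec(F − Y)ᵀ vec(F − Y) + vec(F)ᵀ Ξ⁻¹ vec(F) over F ∈ ℝ^{m×q} has the unique minimizer F* = K(K + λ_d I)⁻¹ Y (G + λ_t I)⁻¹ G. -/
open Matrix Kronecker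

/-- `vec` stacks the columns of a matrix into a single (column) vector, so that
`vec (M * X * N) = (Nᵀ ⊗ M) *ᵥ vec X`. -/
def vecCols {m q : ℕ} (X : Matrix (Fin m) (Fin q) ℝ) : Fin q × Fin m → ℝ :=
  fun p => X p.2 p.1

/-!
With `B = λ_dλ_t I + λ_t (I ⊗ K) + λ_d (G ⊗ I)`, the mixed-product rule gives
`Ξ⁻¹ = B (G ⊗ K)⁻¹ = M - I` for `M = (I + λ_t G⁻¹) ⊗ (I + λ_d K⁻¹)`, a Kronecker product of
positive definite matrices. In `v = vec F` the functional is then `vᵀ M v - 2 vec(Y)ᵀ v + const`,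
and completing the square gives `J(F) - J(F*) = (v - v*)ᵀ M (v - v*) > 0` as soon as
`M v* = vec Y`. That equation holds for `v* = vec F*` because
`(I + λ_d K⁻¹) K = K + λ_d I` and `G (I + λ_t G⁻¹) = G + λ_t I`.
-/

section Vec

variable {m q m' q' : ℕ}

theorem vecCols_injective : Function.Injective (vecCols (m := m) (q := q)) :=
  fun _ _ h => Matrix.ext fun i j => congrFun h (j, i)

theorem vecCols_sub (X X' : Matrix (Fin m) (Fin q) ℝ) :
    vecCols (X - X') = vecCols X - vecCols X' := rfl

theorem vecCols_mul_mul (A : Matrix (Fin m') (Fin m) ℝ) (X : Matrix (Fin m) (Fin q) ℝ)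
    (B : Matrix (Fin q) (Fin q') ℝ) : vecCols (A * X * B) = (Bᵀ ⊗ₖ A) *ᵥ vecCols X := by
  funext ⟨j, i⟩
  simp only [vecCols, mulVec, dotProduct, mul_apply, kroneckerMap_apply, transpose_apply,
    Fintype.sum_prod_type, Finset.sum_mul]
  exact Finset.sum_congr rfl fun _ _ => Finset.sum_congr rfl fun _ _ => by ring

end Vec

section Ridge

variable {n : Type*} [Fintype n]

def ridgeObjective (A : Matrix n n ℝ) (y v : n → ℝ) : ℝ :=
  (v - y) ⬝ᵥ (v - y) + v ⬝ᵥ (A *ᵥ v)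

variable [DecidableEq n]

theorem ridgeObjective_sub_ridgeObjective {M : Matrix n n ℝ} (hM : M.IsSymm) {y v₀ : n → ℝ}
    (hv₀ : M *ᵥ v₀ = y) (v : n → ℝ) :
    ridgeObjective (M - 1) y v - ridgeObjective (M - 1) y v₀ =
      (v - v₀) ⬝ᵥ (M *ᵥ (v - v₀)) := by
  have hsymm : v₀ ⬝ᵥ (M *ᵥ v) = v ⬝ᵥ (M *ᵥ v₀) := by
    rw [dotProduct_mulVec, ← mulVec_transpose, hM.eq, dotProduct_comm]
  subst hv₀
  simp only [ridgeObjective, sub_mulVec, one_mulVec, mulVec_sub, dotProduct_sub, sub_dotProduct,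
    dotProduct_comm (M *ᵥ v₀), hsymm]
  ring

theorem ridgeObjective_lt {M : Matrix n n ℝ} (hM : M.PosDef) {y v₀ v : n → ℝ}
    (hv₀ : M *ᵥ v₀ = y) (hv : v ≠ v₀) :
    ridgeObjective (M - 1) y v₀ < ridgeObjective (M - 1) y v := by
  have hgap := ridgeObjective_sub_ridgeObjective (isHermitian_iff_isSymm.1 hM.isHermitian) hv₀ v
  have hpos := hM.dotProduct_mulVec_pos (sub_ne_zero.2 hv)
  simp only [star_trivial] at hpos
  linarith

end Ridge

section Shift

variable {n : Type*} [DecidableEq n]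

theorem Matrix.PosDef.add_smul_one {A : Matrix n n ℝ} (hA : A.PosDef) {c : ℝ} (hc : 0 ≤ c) :
    (A + c • 1).PosDef :=
  hA.add_posSemidef (PosSemidef.one.smul hc)

variable [Fintype n]

theorem one_add_smul_inv_mul {R : Type*} [CommRing R] {A : Matrix n n R} (hA : IsUnit A.det)
    (c : R) : (1 + c • A⁻¹) * A = A + c • 1 := by
  rw [add_mul, one_mul, smul_mul_assoc, nonsing_inv_mul _ hA]

theorem mul_one_add_smul_inv {R : Type*} [CommRing R] {A : Matrix n n R} (hA : IsUnit A.det)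
    (c : R) : A * (1 + c • A⁻¹) = A + c • 1 := by
  rw [mul_add, mul_one, mul_smul_comm, mul_nonsing_inv _ hA]

theorem Matrix.PosDef.one_add_smul_inv {A : Matrix n n ℝ} (hA : A.PosDef) {c : ℝ} (hc : 0 ≤ c) :
    (1 + c • A⁻¹).PosDef :=
  PosDef.one.add_posSemidef (hA.inv.posSemidef.smul hc)

end Shift

section KroneckerSum

variable {n p : Type*} [Fintype n] [DecidableEq n] [Fintype p] [DecidableEq p]

theorem Matrix.PosDef.smul_one_add_kroneckerSum {K : Matrix n n ℝ} {G : Matrix p p ℝ}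
    (hK : K.PosSemidef) (hG : G.PosSemidef) {ld lt : ℝ} (hld : 0 < ld) (hlt : 0 < lt) :
    ((ld * lt) • 1 + lt • ((1 : Matrix p p ℝ) ⊗ₖ K) + ld • (G ⊗ₖ (1 : Matrix n n ℝ))).PosDef :=
  ((PosDef.one.smul (mul_pos hld hlt)).add_posSemidef
    ((PosSemidef.one.kronecker hK).smul hlt.le)).add_posSemidef
    ((hG.kronecker PosSemidef.one).smul hld.le)

theorem smul_one_add_kroneckerSum_mul_inv {K : Matrix n n ℝ} {G : Matrix p p ℝ}
    (hK : IsUnit K.det) (hG : IsUnit G.det) (ld lt : ℝ) :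
    ((ld * lt) • 1 + lt • ((1 : Matrix p p ℝ) ⊗ₖ K) + ld • (G ⊗ₖ (1 : Matrix n n ℝ))) *
        (G ⊗ₖ K)⁻¹ = (1 + lt • G⁻¹) ⊗ₖ (1 + ld • K⁻¹) - 1 := by
  simp only [inv_kronecker, add_mul, smul_mul_assoc, one_mul, ← mul_kronecker_mul,
    mul_nonsing_inv _ hK, mul_nonsing_inv _ hG, add_kronecker, kronecker_add, smul_kronecker,
    kronecker_smul, one_kronecker_one]
  module

end KroneckerSum

theorem one_add_smul_inv_kronecker_mulVec_vecCols {m q : ℕ} {K : Matrix (Fin m) (Fin m) ℝ}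
    (hK : K.PosDef) {G : Matrix (Fin q) (Fin q) ℝ} (hG : G.PosDef) (Y : Matrix (Fin m) (Fin q) ℝ)
    {ld lt : ℝ} (hld : 0 ≤ ld) (hlt : 0 ≤ lt) :
    ((1 + lt • G⁻¹) ⊗ₖ (1 + ld • K⁻¹)) *ᵥ vecCols (K * (K + ld • 1)⁻¹ * Y * ((G + lt • 1)⁻¹ * G))
      = vecCols Y := by
  have hKu := (isUnit_iff_isUnit_det K).1 hK.isUnit
  have hGu := (isUnit_iff_isUnit_det G).1 hG.isUnit
  have hKdu := (isUnit_iff_isUnit_det _).1 (hK.add_smul_one hld).isUnit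
  have hGtu := (isUnit_iff_isUnit_det _).1 (hG.add_smul_one hlt).isUnit
  have hsymm : (1 + lt • G⁻¹)ᵀ = 1 + lt • G⁻¹ :=
    (isSymm_one.add ((isHermitian_iff_isSymm.1 hG.isHermitian).inv.smul lt)).eq
  rw [← hsymm, ← vecCols_mul_mul]
  congr 1
  calc (1 + ld • K⁻¹) * (K * (K + ld • 1)⁻¹ * Y * ((G + lt • 1)⁻¹ * G)) * (1 + lt • G⁻¹)
      = (1 + ld • K⁻¹) * K * (K + ld • 1)⁻¹ * Y * (G + lt • 1)⁻¹ * (G * (1 + lt • G⁻¹)) := by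
        simp only [Matrix.mul_assoc]
    _ = Y := by
        rw [one_add_smul_inv_mul hKu, mul_one_add_smul_inv hGu, mul_nonsing_inv _ hKdu,
          Matrix.one_mul, Matrix.mul_assoc, nonsing_inv_mul _ hGtu, Matrix.mul_one]

/-- Setting A equivalence: with
`Ξ = (G ⊗ K)(λ_dλ_t I + λ_t (I ⊗ K) + λ_d (G ⊗ I))⁻¹` (which is invertible),
the functional `J(F) = vec(F − Y)ᵀ vec(F − Y) + vec(F)ᵀ Ξ⁻¹ vec(F)` has the unique
minimizer `F* = K(K + λ_d I)⁻¹ Y (G + λ_t I)⁻¹ G`. -/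
theorem two_step_krr_stmt3 {m q : ℕ}
    (K : Matrix (Fin m) (Fin m) ℝ) (hK : K.PosDef)
    (G : Matrix (Fin q) (Fin q) ℝ) (hG : G.PosDef)
    (Y : Matrix (Fin m) (Fin q) ℝ) (ld lt : ℝ) (hld : 0 < ld) (hlt : 0 < lt)
    (Ξ : Matrix (Fin q × Fin m) (Fin q × Fin m) ℝ)
    (hΞ : Ξ = (G ⊗ₖ K) *
      ((ld * lt) • 1 + lt • ((1 : Matrix (Fin q) (Fin q) ℝ) ⊗ₖ K)
        + ld • (G ⊗ₖ (1 : Matrix (Fin m) (Fin m) ℝ)))⁻¹)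
    (J : Matrix (Fin m) (Fin q) ℝ → ℝ)
    (hJ : ∀ F, J F = vecCols (F - Y) ⬝ᵥ vecCols (F - Y)
        + vecCols F ⬝ᵥ (Ξ⁻¹ *ᵥ vecCols F))
    (Fstar : Matrix (Fin m) (Fin q) ℝ)
    (hFstar : Fstar = K * (K + ld • 1)⁻¹ * Y * ((G + lt • 1)⁻¹ * G)) :
    IsUnit Ξ.det ∧ (∀ F, F ≠ Fstar → J Fstar < J F) := by
  have hKu := (isUnit_iff_isUnit_det K).1 hK.isUnit
  have hGu := (isUnit_iff_isUnit_det G).1 hG.isUnit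
  have hGKu := (isUnit_iff_isUnit_det _).1 (hG.kronecker hK).isUnit
  have hBu := (isUnit_iff_isUnit_det _).1
    (PosDef.smul_one_add_kroneckerSum hK.posSemidef hG.posSemidef hld hlt).isUnit
  set M := (1 + lt • G⁻¹) ⊗ₖ (1 + ld • K⁻¹)
  have hΞinv : Ξ⁻¹ = M - 1 := by
    rw [hΞ, Matrix.mul_inv_rev, nonsing_inv_nonsing_inv _ hBu,
      smul_one_add_kroneckerSum_mul_inv hKu hGu]
  have hJ_eq (F : Matrix (Fin m) (Fin q) ℝ) :
      J F = ridgeObjective (M - 1) (vecCols Y) (vecCols F) := by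
    rw [hJ, hΞinv, vecCols_sub, ridgeObjective]
  refine ⟨?_, fun F hF => ?_⟩
  · rw [hΞ, det_mul]
    exact hGKu.mul (isUnit_nonsing_inv_det _ hBu)
  · rw [hJ_eq, hJ_eq]
    refine ridgeObjective_lt ((hG.one_add_smul_inv hlt.le).kronecker (hK.one_add_smul_inv hld.le))
      ?_ (vecCols_injective.ne hF)
    rw [hFstar]
    exact one_add_smul_inv_kronecker_mulVec_vecCols hK hG Y hld.le hlt.le
end

section
/- (Setting D equivalence of two-step KRR and ordinary Kronecker kernel least-squares.) Let K be an m×m and G a q×q symmetric positive semidefinite real matrix, Y ∈ ℝ^{m×q}, and λ_d, λ_t > 0. Define the two-step parameter matrix A^{TS} = (K + λ_d I)⁻¹ Y (G + λ_t I)⁻¹ and the OKKLS parameter matrix A^{OKKLS} by vec(A^{OKKLS}) = [(G + λ_t I) ⊗ (K + λ_d I)]⁻¹ vec(Y). Then A^{TS} = A^{OKKLS}. Consequently, if k(·,·) and g(·,·) are real-valued kernel functions on sets 𝒟 and 𝒯 with K_{il} = k(d_i, d_l) and G_{jl} = g(t_j, t_l) for training instances d_1,…,d_m ∈ 𝒟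 and tasks t_1,…,t_q ∈ 𝒯, then for every d ∈ 𝒟 with d ≠ d_i for all i and every t ∈ 𝒯 with t ≠ t_j for all j, Σ_{i,j} A^{OKKLS}_{ij} (k(d,d_i) + λ_d δ(d,d_i))(g(t,t_j) + λ_t δ(t,t_j)) = Σ_{i,j} A^{TS}_{ij} k(d,d_i) g(t,t_j), where δ(x,y) = 1 if x = y and 0 otherwise. -/
open Matrix Kronecker

/-- Setting D equivalence of two-step KRR and OKKLS:
`A^{TS} = (K + λ_d I)⁻¹ Y (G + λ_t I)⁻¹` equals `A^{OKKLS}` defined by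
`vec(A^{OKKLS}) = [(G + λ_t I) ⊗ (K + λ_d I)]⁻¹ vec(Y)`; consequently, for any
new instance `d` and new task `t` (not among the training ones), the OKKLS
prediction with the kernel `(k + λ_d δ)(g + λ_t δ)` coincides with the two-step
prediction `Σ_{i,j} A^{TS}_{ij} k(d,d_i) g(t,t_j)`. -/
theorem two_step_krr_stmt5 {m q : ℕ} {𝒟 𝒯 : Type*} [DecidableEq 𝒟] [DecidableEq 𝒯]
    (k : 𝒟 → 𝒟 → ℝ) (g : 𝒯 → 𝒯 → ℝ) (d : Fin m → 𝒟) (t : Fin q → 𝒯)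
    (K : Matrix (Fin m) (Fin m) ℝ) (hK : K.PosSemidef)
    (G : Matrix (Fin q) (Fin q) ℝ) (hG : G.PosSemidef)
    (hKk : ∀ i l, K i l = k (d i) (d l)) (hGg : ∀ j l, G j l = g (t j) (t l))
    (Y : Matrix (Fin m) (Fin q) ℝ) (ld lt : ℝ) (hld : 0 < ld) (hlt : 0 < lt)
    (ATS : Matrix (Fin m) (Fin q) ℝ)
    (hATS : ATS = (K + ld • 1)⁻¹ * Y * (G + lt • 1)⁻¹)
    (AOK : Matrix (Fin m) (Fin q) ℝ)
    (hAOK : vecCols AOK = ((G + lt • 1) ⊗ₖ (K + ld • 1))⁻¹ *ᵥ vecCols Y) :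
    ATS = AOK ∧
    ∀ (d₀ : 𝒟) (t₀ : 𝒯), (∀ i, d₀ ≠ d i) → (∀ j, t₀ ≠ t j) →
      (∑ i, ∑ j, AOK i j *
          ((k d₀ (d i) + ld * (if d₀ = d i then 1 else 0)) *
            (g t₀ (t j) + lt * (if t₀ = t j then 1 else 0))))
      = ∑ i, ∑ j, ATS i j * (k d₀ (d i) * g t₀ (t j)) := by

  have hQ : (G + lt • (1 : Matrix (Fin q) (Fin q) ℝ)).PosDef := by
    apply Matrix.PosDef.posSemidef_add hG
    rw [Matrix.smul_one_eq_diagonal]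
    exact Matrix.posDef_diagonal_iff.mpr fun _ => hlt
  have hsymQ : ∀ a b, (G + lt • (1 : Matrix (Fin q) (Fin q) ℝ))⁻¹ a b
      = (G + lt • 1)⁻¹ b a := by
    intro a b
    have h : ((G + lt • (1 : Matrix (Fin q) (Fin q) ℝ))⁻¹)ᵀ = (G + lt • 1)⁻¹ := by
      rw [Matrix.transpose_nonsing_inv]
      congr 1
      simpa using hQ.isHermitian.eq
    conv_lhs => rw [← h, Matrix.transpose_apply]
  have main : ATS = AOK := by
    ext i j
    have h1 := congrFun hAOK (j, i)
    rw [Matrix.inv_kronecker] at h1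
    simp only [vecCols, Matrix.mulVec, dotProduct, Fintype.sum_prod_type,
      Matrix.kroneckerMap_apply] at h1
    rw [hATS]
    simp only [Matrix.mul_apply, h1, Finset.sum_mul]
    refine Finset.sum_congr rfl fun j' _ => Finset.sum_congr rfl fun i' _ => ?_
    rw [hsymQ j j']
    ring
  refine ⟨main, fun d₀ t₀ hd0 ht0 => ?_⟩
  simp only [if_neg (hd0 _), if_neg (ht0 _), mul_zero, add_zero, main]
end

section
/- (Qualification bound for the two-step spectral filter.) Let a, b ≥ 1, let ς > 0 and λ > 0, let ν ∈ (0, 1/2], and let σ, s, λ_d, λ_t be positive reals with σ·s = ς, 0 < σ ≤ a√ς, 0 < s ≤ a√ς, λ_d·λ_t = λ, 0 < λ_d ≤ b√λ, and 0 < λ_t ≤ b√λ. Then (ς/λ)^ν · (1 − ς/(ς + λ_t·σ + λ_d·s + λ)) ≤ 2ab. In particular, for all ς, λ > 0 and ν ∈ (0, 1/2], (2ab·λ^{1/2−ν}·ς^{ν+1/2} + λ^{1−ν}·ς^ν)/(ς + 2ab·√(λς) + λ) ≤ 2ab. -/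
open Real

private lemma ts_factor_le (x ν : ℝ) (hx : 1 ≤ x) (h2 : ν ≤ 1/2) :
    x ^ ν ≤ Real.sqrt x := by
  rw [Real.sqrt_eq_rpow]
  exact Real.rpow_le_rpow_of_exponent_le hx h2

private lemma ts_key1 (a b u v N : ℝ) (ha : 1 ≤ a) (hb : 1 ≤ b) (hu : 0 < u) (hv : 0 < v)
    (h1 : N ≤ 2 * a * b * (u * v) + v ^ 2) (h2 : 2 * (u * v) + v ^ 2 ≤ N) :
    u * N ≤ 2 * a * b * (v * (u ^ 2 + N)) := by
  nlinarith [mul_le_mul_of_nonneg_left h1 hu.le,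
    mul_le_mul_of_nonneg_left h2 (by positivity : (0:ℝ) ≤ 2 * a * b * v),
    mul_pos hu hv, mul_pos (mul_pos hu hu) hv, mul_pos (mul_pos hv hv) hv,
    mul_pos (mul_pos hu hv) hv]

set_option maxHeartbeats 1000000 in
/-- qualification bound for the two-step spectral filter: under the
admissible factorizations `ς = σs`, `λ = λ_dλ_t` with `σ, s ≤ a√ς` and
`λ_d, λ_t ≤ b√λ`, for `ν ∈ (0, 1/2]` one has
`(ς/λ)^ν (1 − ς/(ς + λ_tσ + λ_d s + λ)) ≤ 2ab`; in particular
`(2ab λ^{1/2−ν} ς^{ν+1/2} + λ^{1−ν} ς^ν)/(ς + 2ab √(λς) + λ) ≤ 2ab`. -/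

theorem two_step_krr_stmt9 (a b : ℝ) (ha : 1 ≤ a) (hb : 1 ≤ b) :
    (∀ ς lam ν σ s ld lt : ℝ, 0 < ς → 0 < lam → 0 < ν → ν ≤ 1 / 2 →
      0 < σ → 0 < s → 0 < ld → 0 < lt →
      σ * s = ς → σ ≤ a * Real.sqrt ς → s ≤ a * Real.sqrt ς →
      ld * lt = lam → ld ≤ b * Real.sqrt lam → lt ≤ b * Real.sqrt lam →
      (ς / lam) ^ ν * (1 - ς / (ς + lt * σ + ld * s + lam)) ≤ 2 * a * b) ∧
    (∀ ς lam ν : ℝ, 0 < ς → 0 < lam → 0 < ν → ν ≤ 1 / 2 →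
      (2 * a * b * lam ^ (1 / 2 - ν) * ς ^ (ν + 1 / 2) + lam ^ (1 - ν) * ς ^ ν) /
          (ς + 2 * a * b * Real.sqrt (lam * ς) + lam)
        ≤ 2 * a * b) := by
  have hab : 1 ≤ a * b := one_le_mul_of_one_le_of_one_le ha hb
  constructor
  · intro ς lam ν σ s ld lt hς hlam hν hν2 hσ hs hld hlt hfac hσa hsa hlfac hldb hltb
    set u := Real.sqrt ς with hu
    set v := Real.sqrt lam with hv
    have hupos : 0 < u := Real.sqrt_pos.mpr hς
    have hvpos : 0 < v := Real.sqrt_pos.mpr hlam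
    have hu2 : u ^ 2 = ς := Real.sq_sqrt hς.le
    have hv2 : v ^ 2 = lam := Real.sq_sqrt hlam.le
    obtain ⟨N, hN⟩ : ∃ N : ℝ, N = lt * σ + ld * s + lam := ⟨_, rfl⟩
    have hNpos : 0 < N := by rw [hN]; positivity
    have hDpos : 0 < ς + lt * σ + ld * s + lam := by positivity
    have hrw : 1 - ς / (ς + lt * σ + ld * s + lam) = N / (ς + N) := by
      rw [hN]; field_simp; ring
    rw [hrw]
    have hNub : N ≤ 2 * a * b * (u * v) + v ^ 2 := by
      have h1 : lt * σ ≤ (b * v) * (a * u) :=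
        mul_le_mul hltb hσa hσ.le (by positivity)
      have h2 : ld * s ≤ (b * v) * (a * u) :=
        mul_le_mul hldb hsa hs.le (by positivity)
      rw [hN]; nlinarith [h1, h2]
    rcases le_or_gt ς lam with hc | hc
    · have hf1 : (ς / lam) ^ ν ≤ 1 :=
        Real.rpow_le_one (by positivity) (div_le_one_of_le₀ hc hlam.le) hν.le
      have hf2 : N / (ς + N) ≤ 1 := by
        rw [div_le_one (by positivity)]; linarith
      have : (ς / lam) ^ ν * (N / (ς + N)) ≤ 1 * 1 :=
        mul_le_mul hf1 hf2 (by positivity) zero_le_one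
      nlinarith
    · have hf1 : (ς / lam) ^ ν ≤ u / v := by
        have h1 : (1 : ℝ) ≤ ς / lam := (one_le_div hlam).mpr hc.le
        have := ts_factor_le (ς / lam) ν h1 hν2
        rwa [Real.sqrt_div hς.le lam] at this
      have hNlb : 2 * (u * v) + v ^ 2 ≤ N := by
        have key : u * v ≤ (lt * σ + ld * s) / 2 := by
          have h0 : Real.sqrt (lam * ς) ≤ Real.sqrt (((lt * σ + ld * s) / 2) ^ 2) := by
            apply Real.sqrt_le_sqrt
            have hls : lam * ς = (lt * σ) * (ld * s) := by
              rw [← hfac, ← hlfac]; ring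
            rw [hls]; nlinarith [sq_nonneg (lt * σ - ld * s)]
          rwa [Real.sqrt_sq (by positivity), Real.sqrt_mul hlam.le,
            ← hv, ← hu, mul_comm v u] at h0
        rw [hN]; nlinarith
      have hstep : (ς / lam) ^ ν * (N / (ς + N)) ≤ (u / v) * (N / (ς + N)) :=
        mul_le_mul_of_nonneg_right hf1 (by positivity)
      refine hstep.trans ?_
      rw [div_mul_div_comm, div_le_iff₀ (by positivity), ← hu2]
      exact ts_key1 a b u v N ha hb hupos hvpos hNub hNlb
  · intro ς lam ν hς hlam hν hν2
    obtain ⟨u, hu⟩ : ∃ u : ℝ, u = Real.sqrt ς := ⟨_, rfl⟩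
    obtain ⟨v, hv⟩ : ∃ v : ℝ, v = Real.sqrt lam := ⟨_, rfl⟩
    have hupos : 0 < u := hu ▸ Real.sqrt_pos.mpr hς
    have hvpos : 0 < v := hv ▸ Real.sqrt_pos.mpr hlam
    have hu2 : u ^ 2 = ς := by rw [hu]; exact Real.sq_sqrt hς.le
    have hv2 : v ^ 2 = lam := by rw [hv]; exact Real.sq_sqrt hlam.le
    have hsm : Real.sqrt (lam * ς) = v * u := by
      rw [Real.sqrt_mul hlam.le, ← hu, ← hv]
    have hnum : 2 * a * b * lam ^ (1 / 2 - ν) * ς ^ (ν + 1 / 2) + lam ^ (1 - ν) * ς ^ ν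
        = (ς / lam) ^ ν * (2 * a * b * (u * v) + lam) := by
      rw [hu, hv, Real.div_rpow hς.le hlam.le, Real.rpow_sub hlam, Real.rpow_sub hlam,
        Real.rpow_add hς, Real.rpow_one, Real.sqrt_eq_rpow, Real.sqrt_eq_rpow]
      ring
    rw [hnum, div_le_iff₀ (by positivity), hsm]
    rcases le_or_gt ς lam with hc | hc
    · have hf1 : (ς / lam) ^ ν ≤ 1 :=
        Real.rpow_le_one (by positivity) (div_le_one_of_le₀ hc hlam.le) hν.le
      have h2 : (ς / lam) ^ ν * (2 * a * b * (u * v) + lam)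
          ≤ 1 * (2 * a * b * (u * v) + lam) :=
        mul_le_mul_of_nonneg_right hf1 (by positivity)
      refine h2.trans ?_
      rw [← hu2, ← hv2]
      have hab1 : (0:ℝ) ≤ 2 * a * b - 1 := by nlinarith
      have k1 : 0 ≤ (2 * a * b - 1) * (2 * a * b * (u * v)) :=
        mul_nonneg hab1 (by positivity)
      have k2 : 0 ≤ (2 * a * b - 1) * (v * v) := mul_nonneg hab1 (by positivity)
      have k3 : 0 ≤ 2 * a * b * (u * u) := by positivity
      nlinarith [k1, k2, k3]
    · have hf1 : (ς / lam) ^ ν ≤ u / v := by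
        have h1 : (1 : ℝ) ≤ ς / lam := (one_le_div hlam).mpr hc.le
        have := ts_factor_le (ς / lam) ν h1 hν2
        rwa [Real.sqrt_div hς.le lam, ← hu, ← hv] at this
      have h2 : (ς / lam) ^ ν * (2 * a * b * (u * v) + lam)
          ≤ (u / v) * (2 * a * b * (u * v) + lam) :=
        mul_le_mul_of_nonneg_right hf1 (by positivity)
      refine h2.trans ?_
      rw [← hu2, ← hv2, div_mul_eq_mul_div, div_le_iff₀ hvpos]
      have hab1 : (0:ℝ) ≤ 4 * (a * b) * (a * b) - 1 := by nlinarith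
      have k1 : 0 ≤ (4 * (a * b) * (a * b) - 1) * (u * (v * v)) :=
        mul_nonneg hab1 (by positivity)
      have k2 : 0 ≤ 2 * a * b * (v * (v * v)) := by positivity
      nlinarith [k1, k2]
end

section
/- (The qualification of the two-step filter is exactly 1/2.) Let a, b ≥ 1 and ν > 1/2. Then the quantity (ς/λ)^ν · (1 − ς/(ς + 2ab·√(λς) + λ)) is unbounded as λ → 0⁺: for every C > 0 there exists λ ∈ (0, 1) such that, taking ς = 1, (1/λ)^ν · (1 − 1/(1 + 2ab·√λ + λ)) > C. -/
open Real

/-- the qualification of the two-step filter is exactly 1/2: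
for `ν > 1/2` the quantity `(1/λ)^ν (1 − 1/(1 + 2ab√λ + λ))` is unbounded
as `λ → 0⁺`. -/
theorem two_step_krr_stmt10 (a b : ℝ) (ha : 1 ≤ a) (hb : 1 ≤ b)
    (ν : ℝ) (hν : 1 / 2 < ν) :
    ∀ C : ℝ, 0 < C → ∃ lam : ℝ, 0 < lam ∧ lam < 1 ∧
      (1 / lam) ^ ν * (1 - 1 / (1 + 2 * a * b * Real.sqrt lam + lam)) > C := by
  intro C hC
  set ε : ℝ := ν - 1 / 2 with hεdef
  have hε : 0 < ε := by simp [hεdef]; linarith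
  have hbase : (0 : ℝ) < 2 * C + 2 := by linarith
  set L : ℝ := (2 * C + 2) ^ (-(1 / ε)) with hLdef
  have hL : 0 < L := Real.rpow_pos_of_pos hbase _
  set lam : ℝ := min (1/2) L with hlamdef
  have hlam : 0 < lam := lt_min (by norm_num) hL
  have hlam1 : lam < 1 := lt_of_le_of_lt (min_le_left _ _) (by norm_num)
  refine ⟨lam, hlam, hlam1, ?_⟩
  have hab : (1 : ℝ) ≤ a * b := one_le_mul_of_one_le_of_one_le ha hb
  have hs0 : 0 ≤ Real.sqrt lam := Real.sqrt_nonneg _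
  have hs1 : Real.sqrt lam ≤ 1 := by
    rw [show (1:ℝ) = Real.sqrt 1 by simp]
    exact Real.sqrt_le_sqrt hlam1.le
  have hspos : 0 < Real.sqrt lam := Real.sqrt_pos.mpr hlam
  set D : ℝ := 1 + 2 * a * b * Real.sqrt lam + lam with hDdef
  have hD0 : 0 < D := by
    have : 0 ≤ 2 * a * b * Real.sqrt lam := by positivity
    nlinarith
  have hDle : D ≤ 4 * (a * b) := by
    have h1 : 2 * a * b * Real.sqrt lam ≤ 2 * a * b := by nlinarith
    nlinarith
  -- lower bound for the second factor
  have hfac : Real.sqrt lam / 2 ≤ 1 - 1 / D := by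
    have h1 : 1 - 1 / D = (2 * a * b * Real.sqrt lam + lam) / D := by
      field_simp
      rw [hDdef]; ring
    rw [h1]
    rw [div_le_div_iff₀ (by norm_num) hD0]
    have : Real.sqrt lam * D ≤ Real.sqrt lam * (4 * (a * b)) := by
      exact mul_le_mul_of_nonneg_left hDle hs0
    nlinarith
  have hpow : (1 / lam) ^ ν * Real.sqrt lam = lam ^ (-ε) := by
    rw [Real.sqrt_eq_rpow, one_div, Real.inv_rpow hlam.le,
      ← Real.rpow_neg hlam.le, ← Real.rpow_add hlam]
    congr 1
    rw [hεdef]; ring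
  have hlamL : lam ≤ L := min_le_right _ _
  have hLeps : L ^ (-ε) = 2 * C + 2 := by
    rw [hLdef, ← Real.rpow_mul hbase.le]
    rw [show -(1/ε) * -ε = 1 by field_simp, Real.rpow_one]
  have hkey : 2 * C + 2 ≤ lam ^ (-ε) := by
    rw [← hLeps]
    exact Real.rpow_le_rpow_of_nonpos hlam hlamL (by linarith)
  have hposfac : (0:ℝ) < (1 / lam) ^ ν := Real.rpow_pos_of_pos (by positivity) _
  have : (1 / lam) ^ ν * (Real.sqrt lam / 2) ≤ (1 / lam) ^ ν * (1 - 1 / D) :=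
    mul_le_mul_of_nonneg_left hfac hposfac.le
  have h2 : (1 / lam) ^ ν * (Real.sqrt lam / 2) = lam ^ (-ε) / 2 := by
    rw [← hpow]; ring
  have : lam ^ (-ε) / 2 ≤ (1 / lam) ^ ν * (1 - 1 / D) := by
    rw [← h2]; exact this
  have : C + 1 ≤ (1 / lam) ^ ν * (1 - 1 / D) := by linarith
  linarith
end

section
/- (Leave-one-out shortcut for kernel ridge regression.) Let m ≥ 2, let K be an m×m symmetric positive semidefinite real matrix, Y ∈ ℝ^{m×q}, λ > 0, and H = K(K + λI)⁻¹. Fix an index i. Let K^{(i)} be the (m−1)×(m−1) matrix obtained from K by deleting row i and column i, let Y^{(i)} ∈ ℝ^{(m−1)×q} be Y with row i deleted, and let κ_i ∈ ℝ^{m−1} be the i-th row of K with its i-th entry deleted. Then κ_iᵀ (K^{(i)} + λI)⁻¹ Y^{(i)} = (H_{i·} Y − H_{ii} Y_{i·}) / (1 − H_{ii}), where H_{i·} denotes the i-th row of H and Y_{i·} the i-th row of Y. -/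
open Matrix

/-!
Write `B = (K + λI)⁻¹`, so that `H = I - λB`. The `i`-th row of `B (K + λI) = I`, read off the
diagonal and with the index `i` split off, says `B_ii κ_iᵀ + B_{i,-i} (K^{(i)} + λI) = 0`, that is
`κ_iᵀ (K^{(i)} + λI)⁻¹ = -B_{i,-i} / B_ii`. Here `B_ii ≠ 0`, since otherwise the whole row `i` of
the invertible matrix `B` would vanish. Both sides of the claim are therefore
`-(B_{i·} Y - B_ii Y_{i·}) / B_ii`.
-/

namespace Matrix

variable {n : Type*} [Fintype n] [DecidableEq n]

theorem mul_inv_add_smul_one {R : Type*} [CommRing R] (K : Matrix n n R) (c : R)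
    (h : IsUnit (K + c • 1).det) : K * (K + c • 1)⁻¹ = 1 - c • (K + c • 1)⁻¹ := by
  nth_rewrite 1 [← add_sub_cancel_right K (c • 1)]
  rw [sub_mul, mul_nonsing_inv _ h, smul_mul, one_mul]

theorem vecMul_submatrix_ne_apply {R q : Type*} [Ring R] (v : n → R) (Y : Matrix n q R)
    (i : n) (j : q) :
    ((fun x : {x // x ≠ i} => v x) ᵥ* Y.submatrix Subtype.val id) j
      = (v ᵥ* Y) j - v i * Y i j := by
  simp only [vecMul, dotProduct, Fintype.sum_eq_add_sum_subtype_ne _ i, submatrix_apply, id]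
  abel

variable {𝕜 : Type*} [Field 𝕜] (A : Matrix n n 𝕜) (i : n)

theorem inv_apply_self_smul_vecMul_inv_submatrix (hA : IsUnit A.det)
    (hD : IsUnit (A.submatrix (Subtype.val : {x // x ≠ i} → n) Subtype.val).det) :
    A⁻¹ i i • ((fun x : {x // x ≠ i} => A i x) ᵥ*
        (A.submatrix (Subtype.val : {x // x ≠ i} → n) Subtype.val)⁻¹)
      = -fun x : {x // x ≠ i} => A⁻¹ i x := by
  set D := A.submatrix (Subtype.val : {x // x ≠ i} → n) Subtype.val
  have hrow : A⁻¹ i i • (fun x : {x // x ≠ i} => A i x)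
      + (fun x : {x // x ≠ i} => A⁻¹ i x) ᵥ* D = 0 := by
    funext x
    have h := congrFun₂ (nonsing_inv_mul A hA) i x
    rw [mul_apply, Fintype.sum_eq_add_sum_subtype_ne _ i, one_apply_ne x.2.symm] at h
    simpa [vecMul, dotProduct, D] using h
  have h := congrArg (· ᵥ* D⁻¹) hrow
  simp only [add_vecMul, vecMul_vecMul, mul_nonsing_inv D hD, vecMul_one, zero_vecMul] at h
  rw [← smul_vecMul]
  exact eq_neg_of_add_eq_zero_left h

theorem inv_apply_self_ne_zero (hA : IsUnit A.det)
    (hD : IsUnit (A.submatrix (Subtype.val : {x // x ≠ i} → n) Subtype.val).det) :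
    A⁻¹ i i ≠ 0 := by
  intro h0
  have hrow := inv_apply_self_smul_vecMul_inv_submatrix A i hA hD
  rw [h0, zero_smul, eq_comm, neg_eq_zero] at hrow
  refine (isUnit_nonsing_inv_det A hA).ne_zero (det_eq_zero_of_row_eq_zero i fun x => ?_)
  obtain rfl | hx := eq_or_ne x i
  · exact h0
  · exact congrFun hrow ⟨x, hx⟩

theorem vecMul_inv_submatrix_mul_submatrix (hA : IsUnit A.det)
    (hD : IsUnit (A.submatrix (Subtype.val : {x // x ≠ i} → n) Subtype.val).det)
    {q : Type*} (Y : Matrix n q 𝕜) :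
    (fun x : {x // x ≠ i} => A i x) ᵥ*
        ((A.submatrix Subtype.val Subtype.val : Matrix {x // x ≠ i} {x // x ≠ i} 𝕜)⁻¹ *
          (Y.submatrix Subtype.val id : Matrix {x // x ≠ i} q 𝕜))
      = fun j => -((A⁻¹ * Y) i j - A⁻¹ i i * Y i j) / A⁻¹ i i := by
  have hrow := inv_apply_self_smul_vecMul_inv_submatrix A i hA hD
  rw [← eq_inv_smul_iff₀ (inv_apply_self_ne_zero A i hA hD)] at hrow
  rw [← vecMul_vecMul, hrow]
  funext j
  rw [smul_vecMul, Pi.smul_apply, neg_vecMul, Pi.neg_apply, vecMul_submatrix_ne_apply,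
    smul_eq_mul, mul_apply_eq_vecMul, inv_mul_eq_div]

end Matrix

theorem two_step_krr_stmt12_general {m q : ℕ}
    (K : Matrix (Fin m) (Fin m) ℝ) (hK : K.PosSemidef)
    (Y : Matrix (Fin m) (Fin q) ℝ) (lam : ℝ) (hlam : 0 < lam) (i : Fin m)
    (H : Matrix (Fin m) (Fin m) ℝ) (hH : H = K * (K + lam • 1)⁻¹)
    (Kdel : Matrix {x : Fin m // x ≠ i} {x : Fin m // x ≠ i} ℝ)
    (hKdel : Kdel = K.submatrix (fun x => x.val) (fun x => x.val))
    (Ydel : Matrix {x : Fin m // x ≠ i} (Fin q) ℝ)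
    (hYdel : Ydel = Y.submatrix (fun x => x.val) id)
    (κ : {x : Fin m // x ≠ i} → ℝ) (hκ : κ = fun x => K i x.val) :
    κ ᵥ* ((Kdel + lam • 1)⁻¹ * Ydel)
      = fun j => ((H * Y) i j - H i i * Y i j) / (1 - H i i) := by
  have hA : (K + lam • 1).PosDef := PosDef.posSemidef_add hK (PosDef.one.smul hlam)
  have hAu := (isUnit_iff_isUnit_det _).mp hA.isUnit
  have hDu := (isUnit_iff_isUnit_det _).mp
    (hA.submatrix (Subtype.val_injective (p := (· ≠ i)))).isUnit
  have hminor : Kdel + lam • 1 = (K + lam • 1).submatrix Subtype.val Subtype.val := by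
    ext x y
    simp [hKdel, one_apply, Subtype.ext_iff]
  have hκA : κ = fun x : {x // x ≠ i} => (K + lam • 1) i x := by
    funext x
    simp [hκ, one_apply_ne x.2.symm]
  have hHA : H = 1 - lam • (K + lam • 1)⁻¹ := hH.trans (mul_inv_add_smul_one _ _ hAu)
  have hHY : H * Y = Y - lam • ((K + lam • 1)⁻¹ * Y) := by
    rw [hHA, Matrix.sub_mul, Matrix.one_mul, Matrix.smul_mul]
  rw [hminor, hκA, hYdel, vecMul_inv_submatrix_mul_submatrix _ i hAu hDu, hHY, hHA]
  funext j
  have hii := inv_apply_self_ne_zero _ i hAu hDu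
  simp only [Matrix.sub_apply, Matrix.smul_apply, one_apply_eq, smul_eq_mul]
  field_simp
  ring

/-- leave-one-out shortcut for kernel ridge regression: training on the
`m−1` instances other than `i` and predicting at instance `i` gives
`(H_{i·} Y − H_{ii} Y_{i·}) / (1 − H_{ii})` where `H = K(K + λI)⁻¹`. -/
theorem two_step_krr_stmt12 {m q : ℕ} (hm : 2 ≤ m)
    (K : Matrix (Fin m) (Fin m) ℝ) (hK : K.PosSemidef)
    (Y : Matrix (Fin m) (Fin q) ℝ) (lam : ℝ) (hlam : 0 < lam) (i : Fin m)
    (H : Matrix (Fin m) (Fin m) ℝ) (hH : H = K * (K + lam • 1)⁻¹)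
    (Kdel : Matrix {x : Fin m // x ≠ i} {x : Fin m // x ≠ i} ℝ)
    (hKdel : Kdel = K.submatrix (fun x => x.val) (fun x => x.val))
    (Ydel : Matrix {x : Fin m // x ≠ i} (Fin q) ℝ)
    (hYdel : Ydel = Y.submatrix (fun x => x.val) id)
    (κ : {x : Fin m // x ≠ i} → ℝ) (hκ : κ = fun x => K i x.val) :
    κ ᵥ* ((Kdel + lam • 1)⁻¹ * Ydel)
      = fun j => ((H * Y) i j - H i i * Y i j) / (1 - H i i) :=
  two_step_krr_stmt12_general K hK Y lam hlam i H hH Kdel hKdel Ydel hYdel κ hκ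
end

section
/- (Leave-one-dyad-out shortcut for Kronecker kernel ridge regression, Setting A.) Let K be an m×m and G a q×q symmetric positive semidefinite real matrix with mq ≥ 2, Y ∈ ℝ^{m×q}, λ > 0, Γ = G ⊗ K, y = vec(Y), and H^{KK} = Γ(Γ + λI)⁻¹. Fix a dyad index s (corresponding to instance i and task j, s = mj + i in 0-based indexing). Let Γ^{(s)} be Γ with row s and column s deleted, y^{(s)} be y with entry s deleted, and γ_s ∈ ℝ^{mq−1} be row s of Γ with entry s deleted. Then γ_sᵀ (Γ^{(s)} + λI)⁻¹ y^{(s)} = (H^{KK}_{s·} y − H^{KK}_{ss} Y_{ij}) / (1 − H^{KK}_{ss}). -/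
/-!
Write `A = Γ + λI` and let `w` solve the leave-one-out system `A^{(s)} w = y^{(s)}`. Padding `w`
with a zero at `s` gives a vector `c` with `A c = z`, where `z` is `y` with its `s`-th entry
replaced by the leave-one-out prediction `p = γ_sᵀ w`. Hence `p = (Γ c)_s = (H z)_s
= (H y)_s + H_ss (p - y_s)`, which can be solved for `p` because `1 - H_ss = λ (A⁻¹)_ss > 0`.
-/

open Matrix Kronecker

namespace Matrix

variable {n : Type*} [DecidableEq n]

def extendZeroAt {α : Type*} [Zero α] (s : n) (w : {x // x ≠ s} → α) : n → α :=
  fun t => if h : t = s then 0 else w ⟨t, h⟩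

@[simp]
lemma extendZeroAt_self {α : Type*} [Zero α] (s : n) (w : {x // x ≠ s} → α) :
    extendZeroAt s w s = 0 :=
  dif_pos rfl

lemma submatrix_add_smul_one {m α : Type*} [DecidableEq m] [Semiring α] (Γ : Matrix n n α)
    (lam : α) {e : m → n} (he : Function.Injective e) :
    (Γ + lam • 1).submatrix e e = Γ.submatrix e e + lam • 1 := by
  ext i j
  simp [he.eq_iff, one_apply]

section Finite

variable [Fintype n]

lemma mulVec_extendZeroAt {m α : Type*} [NonUnitalNonAssocSemiring α] (A : Matrix m n α) (s : n)
    (w : {x // x ≠ s} → α) :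
    A *ᵥ extendZeroAt s w = A.submatrix id Subtype.val *ᵥ w := by
  ext t
  simp only [mulVec, dotProduct, Fintype.sum_eq_add_sum_subtype_ne _ s, extendZeroAt_self,
    mul_zero, zero_add, submatrix_apply, id]
  exact Finset.sum_congr rfl fun u _ => by simp [extendZeroAt, u.2]

lemma mulVec_extendZeroAt_inv_submatrix_mulVec_of_ne {K : Type*} [Field K] (A : Matrix n n K)
    {s : n} (hA : IsUnit (A.submatrix (Subtype.val : {x // x ≠ s} → n) Subtype.val).det)
    (y : n → K) {t : n} (ht : t ≠ s) :
    (A *ᵥ extendZeroAt s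
      ((A.submatrix Subtype.val Subtype.val)⁻¹ *ᵥ fun x : {x // x ≠ s} => y x)) t = y t := by
  rw [mulVec_extendZeroAt]
  change (A.submatrix (Subtype.val : {x // x ≠ s} → n) Subtype.val *ᵥ _) ⟨t, ht⟩ = y t
  rw [mulVec_mulVec, mul_nonsing_inv _ hA, one_mulVec]

lemma mulVec_update_apply {α : Type*} [NonUnitalNonAssocRing α] (H : Matrix n n α) (y : n → α)
    (s : n) (a : α) (t : n) :
    (H *ᵥ Function.update y s a) t = (H *ᵥ y) t + H t s * (a - y s) := by
  have hupdate : Function.update y s a = y + Pi.single s (a - y s) := by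
    ext u
    rcases eq_or_ne u s with rfl | hu <;> simp [*]
  rw [hupdate, mulVec_add]
  simp [mulVec_single]

variable {K : Type*} [Field K]

noncomputable def ridgeHat (Γ : Matrix n n K) (lam : K) : Matrix n n K :=
  Γ * (Γ + lam • 1)⁻¹

lemma ridgeHat_eq_one_sub {Γ : Matrix n n K} {lam : K} (hA : IsUnit (Γ + lam • 1).det) :
    ridgeHat Γ lam = 1 - lam • (Γ + lam • 1)⁻¹ := by
  rw [ridgeHat]
  nth_rw 1 [← add_sub_cancel_right Γ (lam • 1)]
  rw [sub_mul, mul_nonsing_inv _ hA, smul_mul, one_mul]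

theorem leaveOneOut_prediction_eq (Γ : Matrix n n K) (lam : K) (s : n) (y : n → K)
    (hA : IsUnit (Γ + lam • 1).det)
    (hM : IsUnit (Γ.submatrix (Subtype.val : {x // x ≠ s} → n) Subtype.val + lam • 1).det)
    (hH : ridgeHat Γ lam s s ≠ 1) :
    (fun x : {x // x ≠ s} => Γ s x) ⬝ᵥ
        ((Γ.submatrix Subtype.val Subtype.val + lam • 1)⁻¹ *ᵥ fun x : {x // x ≠ s} => y x)
      = ((ridgeHat Γ lam *ᵥ y) s - ridgeHat Γ lam s s * y s) / (1 - ridgeHat Γ lam s s) := by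
  rw [← submatrix_add_smul_one Γ lam Subtype.val_injective] at hM ⊢
  set A := Γ + lam • 1
  set w := (A.submatrix (Subtype.val : {x // x ≠ s} → n) Subtype.val)⁻¹ *ᵥ
    fun x : {x // x ≠ s} => y x
  set p := (fun x : {x // x ≠ s} => Γ s x) ⬝ᵥ w
  have hΓc : (Γ *ᵥ extendZeroAt s w) s = p := by
    rw [mulVec_extendZeroAt]
    rfl
  have hAc : A *ᵥ extendZeroAt s w = Function.update y s p := by
    ext t
    rcases eq_or_ne t s with rfl | ht
    · simp [A, add_mulVec, smul_mulVec, hΓc]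
    · rw [Function.update_of_ne ht]
      exact mulVec_extendZeroAt_inv_submatrix_mulVec_of_ne A hM y ht
  have hp : p = (ridgeHat Γ lam *ᵥ Function.update y s p) s := by
    rw [ridgeHat, ← mulVec_mulVec, ← hAc, mulVec_mulVec _ _ A, nonsing_inv_mul _ hA, one_mulVec,
      hΓc]
  rw [mulVec_update_apply] at hp
  rw [eq_div_iff (sub_ne_zero.mpr hH.symm)]
  linear_combination hp

end Finite

variable {K : Type*} [Field K] [LinearOrder K] [IsOrderedRing K] [StarRing K] [StarOrderedRing K]

lemma PosSemidef.posDef_add_smul_one {Γ : Matrix n n K} (hΓ : Γ.PosSemidef) {lam : K}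
    (hlam : 0 < lam) : (Γ + lam • 1).PosDef :=
  PosDef.posSemidef_add hΓ (PosDef.one.smul hlam)

lemma PosSemidef.ridgeHat_apply_self_lt_one [Fintype n] {Γ : Matrix n n K}
    (hΓ : Γ.PosSemidef) {lam : K} (hlam : 0 < lam) (s : n) : ridgeHat Γ lam s s < 1 := by
  have hA := hΓ.posDef_add_smul_one hlam
  rw [ridgeHat_eq_one_sub ((isUnit_iff_isUnit_det _).mp hA.isUnit), sub_apply, one_apply_eq,
    smul_apply, smul_eq_mul, sub_lt_self_iff]
  exact mul_pos hlam hA.inv.diag_pos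

end Matrix

theorem two_step_krr_stmt13_general {m q : ℕ}
    (K : Matrix (Fin m) (Fin m) ℝ) (hK : K.PosSemidef)
    (G : Matrix (Fin q) (Fin q) ℝ) (hG : G.PosSemidef)
    (Y : Matrix (Fin m) (Fin q) ℝ) (lam : ℝ) (hlam : 0 < lam)
    (s : Fin q × Fin m)
    (Γ : Matrix (Fin q × Fin m) (Fin q × Fin m) ℝ) (hΓ : Γ = G ⊗ₖ K)
    (H : Matrix (Fin q × Fin m) (Fin q × Fin m) ℝ) (hH : H = Γ * (Γ + lam • 1)⁻¹)
    (Γdel : Matrix {x : Fin q × Fin m // x ≠ s} {x : Fin q × Fin m // x ≠ s} ℝ)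
    (hΓdel : Γdel = Γ.submatrix (fun x => x.val) (fun x => x.val))
    (ydel : {x : Fin q × Fin m // x ≠ s} → ℝ) (hydel : ydel = fun x => vecCols Y x.val)
    (γs : {x : Fin q × Fin m // x ≠ s} → ℝ) (hγs : γs = fun x => Γ s x.val) :
    γs ⬝ᵥ ((Γdel + lam • 1)⁻¹ *ᵥ ydel)
      = ((H *ᵥ vecCols Y) s - H s s * Y s.2 s.1) / (1 - H s s) := by
  subst hH hΓdel hydel hγs
  have hΓ : Γ.PosSemidef := hΓ ▸ hG.kronecker hK
  have hA := hΓ.posDef_add_smul_one hlam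
  have hM := (hΓ.submatrix (Subtype.val : {x // x ≠ s} → _)).posDef_add_smul_one hlam
  exact leaveOneOut_prediction_eq Γ lam s (vecCols Y) ((isUnit_iff_isUnit_det _).mp hA.isUnit)
    ((isUnit_iff_isUnit_det _).mp hM.isUnit) (hΓ.ridgeHat_apply_self_lt_one hlam s).ne

/-- leave-one-dyad-out shortcut for Kronecker KRR, Setting A:
with `Γ = G ⊗ K`, `y = vec Y` and `H^{KK} = Γ(Γ + λI)⁻¹`, training on the `mq−1`
dyads other than `s = (j, i)` and predicting at dyad `s` gives
`(H^{KK}_{s·} y − H^{KK}_{ss} Y_{ij}) / (1 − H^{KK}_{ss})`. -/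
theorem two_step_krr_stmt13 {m q : ℕ} (hmq : 2 ≤ m * q)
    (K : Matrix (Fin m) (Fin m) ℝ) (hK : K.PosSemidef)
    (G : Matrix (Fin q) (Fin q) ℝ) (hG : G.PosSemidef)
    (Y : Matrix (Fin m) (Fin q) ℝ) (lam : ℝ) (hlam : 0 < lam)
    (s : Fin q × Fin m)
    (Γ : Matrix (Fin q × Fin m) (Fin q × Fin m) ℝ) (hΓ : Γ = G ⊗ₖ K)
    (H : Matrix (Fin q × Fin m) (Fin q × Fin m) ℝ) (hH : H = Γ * (Γ + lam • 1)⁻¹)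
    (Γdel : Matrix {x : Fin q × Fin m // x ≠ s} {x : Fin q × Fin m // x ≠ s} ℝ)
    (hΓdel : Γdel = Γ.submatrix (fun x => x.val) (fun x => x.val))
    (ydel : {x : Fin q × Fin m // x ≠ s} → ℝ) (hydel : ydel = fun x => vecCols Y x.val)
    (γs : {x : Fin q × Fin m // x ≠ s} → ℝ) (hγs : γs = fun x => Γ s x.val) :
    γs ⬝ᵥ ((Γdel + lam • 1)⁻¹ *ᵥ ydel)
      = ((H *ᵥ vecCols Y) s - H s s * Y s.2 s.1) / (1 - H s s) :=
  two_step_krr_stmt13_general K hK G hG Y lam hlam s Γ hΓ H hH Γdel hΓdel ydel hydel γs hγs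
end

section
/- (Leave-one-dyad-out shortcut for two-step kernel ridge regression, Setting A.) Let K be an m×m and G a q×q symmetric positive definite real matrix with mq ≥ 2, Y ∈ ℝ^{m×q}, λ_d, λ_t > 0, and let Ξ = (G ⊗ K)(λ_dλ_t I + λ_t(I ⊗ K) + λ_d(G ⊗ I))⁻¹ and H^{TS} = Ξ(Ξ + I)⁻¹. Then H^{TS} = (G(G+λ_t I)⁻¹) ⊗ (K(K+λ_d I)⁻¹), and for every dyad index s (corresponding to instance i and task j), letting Ξ^{(s)}, y^{(s)}, ξ_s denote Ξ with row and column s deleted, vec(Y) with entry s deleted, and row s of Ξ with entry s deleted respectively, one has ξ_sᵀ (Ξ^{(s)} + I)⁻¹ y^{(s)} = (H^{TS}_{s·} vec(Y) − H^{TS}_{ss} Y_{ij}) / (1 − H^{TS}_{ss}). -/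
open Matrix Kronecker

/-!
Write `Ξ = P Q⁻¹` with `P = G ⊗ K` and `Q = λ_dλ_t I + λ_t(I ⊗ K) + λ_d(G ⊗ I)`. Since
`P + Q = (G + λ_t I) ⊗ (K + λ_d I)`, `H = Ξ(Ξ + I)⁻¹ = P(P + Q)⁻¹`, the Kronecker formula.

For the shortcut put `A = Ξ + I`, so that `H = I - A⁻¹` and `Ξ⁽ˢ⁾ + I = A⁽ˢ⁾`, where
`A⁽ˢ⁾ = A.deleteRowCol s`. Off the diagonal, row `s` of `A⁻¹A = I` says that row `s` of `A⁻¹`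
without its diagonal entry is `-(A⁻¹)ₛₛ ξₛᵀ (A⁽ˢ⁾)⁻¹`; pairing it with `y⁽ˢ⁾` gives the leave-one-out prediction times
`-(A⁻¹)ₛₛ = H_ss - 1`. On the diagonal the same row says that `(A⁻¹)ₛₛ` times a Schur complement
is `1`, so `(A⁻¹)ₛₛ ≠ 0`. Both `A` and `A⁽ˢ⁾` are invertible because `Ξ`, a product of commuting
positive semidefinite matrices, is positive semidefinite.
-/

namespace Matrix

def deleteRowCol {α ι : Type*} (A : Matrix ι ι α) (s : ι) : Matrix {x // x ≠ s} {x // x ≠ s} α :=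
  A.submatrix Subtype.val Subtype.val

lemma deleteRowCol_add_one {α ι : Type*} [AddZeroClass α] [One α] [DecidableEq ι]
    (A : Matrix ι ι α) (s : ι) :
    (A + 1).deleteRowCol s = A.deleteRowCol s + 1 := by
  ext i j
  simp [deleteRowCol, one_apply, Subtype.val_inj]

section LeaveOneOut

variable {𝕜 ι : Type*} [Field 𝕜] [Fintype ι] [DecidableEq ι] {A : Matrix ι ι 𝕜} {s : ι}

lemma inv_row_vecMul_deleteRowCol (hA : IsUnit A) :
    (fun t : {x // x ≠ s} => A⁻¹ s t) ᵥ* A.deleteRowCol s =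
      -A⁻¹ s s • fun t : {x // x ≠ s} => A s t := by
  funext t
  have h := congrFun (congrFun (A.nonsing_inv_mul ((isUnit_iff_isUnit_det A).mp hA)) s) t
  rw [mul_apply, Fintype.sum_eq_add_sum_subtype_ne _ s, one_apply_ne (Ne.symm t.2)] at h
  simp only [vecMul, dotProduct, deleteRowCol, submatrix_apply, Pi.smul_apply, smul_eq_mul]
  linear_combination h

lemma inv_row_eq_neg_smul_vecMul_inv_deleteRowCol (hA : IsUnit A)
    (hAs : IsUnit (A.deleteRowCol s)) :
    (fun t : {x // x ≠ s} => A⁻¹ s t) =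
      -A⁻¹ s s • ((fun t : {x // x ≠ s} => A s t) ᵥ* (A.deleteRowCol s)⁻¹) := by
  rw [← smul_vecMul, ← inv_row_vecMul_deleteRowCol hA, vecMul_vecMul,
    mul_nonsing_inv _ ((isUnit_iff_isUnit_det _).mp hAs), vecMul_one]

lemma inv_diag_mul_schur_complement (hA : IsUnit A)
    (hAs : IsUnit (A.deleteRowCol s)) :
    A⁻¹ s s * (A s s - ((fun t : {x // x ≠ s} => A s t) ᵥ* (A.deleteRowCol s)⁻¹) ⬝ᵥ
      fun t : {x // x ≠ s} => A t s) = 1 := by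
  have h : A⁻¹ s s * A s s + (fun t : {x // x ≠ s} => A⁻¹ s t) ⬝ᵥ (fun t => A t s) = 1 := by
    rw [dotProduct, ← Fintype.sum_eq_add_sum_subtype_ne (fun k => A⁻¹ s k * A k s) s,
      ← mul_apply, nonsing_inv_mul _ ((isUnit_iff_isUnit_det A).mp hA), one_apply_eq]
  rw [inv_row_eq_neg_smul_vecMul_inv_deleteRowCol hA hAs, smul_dotProduct, smul_eq_mul] at h
  linear_combination h

lemma dotProduct_inv_deleteRowCol_mulVec (hA : IsUnit A)
    (hAs : IsUnit (A.deleteRowCol s)) (y : ι → 𝕜) :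
    (fun t : {x // x ≠ s} => A s t) ⬝ᵥ ((A.deleteRowCol s)⁻¹ *ᵥ fun t : {x // x ≠ s} => y t) =
      -((fun t : {x // x ≠ s} => A⁻¹ s t) ⬝ᵥ fun t => y t) / A⁻¹ s s := by
  have hss : A⁻¹ s s ≠ 0 := left_ne_zero_of_mul_eq_one (inv_diag_mul_schur_complement hA hAs)
  rw [eq_div_iff hss, inv_row_eq_neg_smul_vecMul_inv_deleteRowCol hA hAs, smul_dotProduct,
    smul_eq_mul, dotProduct_mulVec]
  ring

theorem krr_leave_one_out (Ξ : Matrix ι ι 𝕜) (hA : IsUnit (Ξ + 1))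
    (hAs : IsUnit (Ξ.deleteRowCol s + 1)) (y : ι → 𝕜) :
    (fun t : {x // x ≠ s} => Ξ s t) ⬝ᵥ
        ((Ξ.deleteRowCol s + 1)⁻¹ *ᵥ fun t : {x // x ≠ s} => y t) =
      (((Ξ * (Ξ + 1)⁻¹) *ᵥ y) s - (Ξ * (Ξ + 1)⁻¹) s s * y s) / (1 - (Ξ * (Ξ + 1)⁻¹) s s) := by
  have hH : Ξ * (Ξ + 1)⁻¹ = 1 - (Ξ + 1)⁻¹ := by
    rw [eq_sub_iff_add_eq, ← add_one_mul, mul_nonsing_inv _ ((isUnit_iff_isUnit_det _).mp hA)]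
  have hrow : (fun t : {x // x ≠ s} => Ξ s t) = fun t : {x // x ≠ s} => (Ξ + 1) s t := by
    funext t
    rw [add_apply, one_apply_ne (Ne.symm t.2), add_zero]
  rw [← deleteRowCol_add_one] at hAs ⊢
  rw [hrow, dotProduct_inv_deleteRowCol_mulVec hA hAs, hH, sub_mulVec, one_mulVec]
  simp only [Pi.sub_apply, sub_apply, one_apply_eq, mulVec, dotProduct,
    Fintype.sum_eq_add_sum_subtype_ne _ s]
  ring

end LeaveOneOut

lemma mul_inv_mul_mul_inv_add_one_inv {𝕜 n : Type*} [Field 𝕜] [Fintype n] [DecidableEq n]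
    {P Q : Matrix n n 𝕜} (hQ : IsUnit Q) :
    P * Q⁻¹ * (P * Q⁻¹ + 1)⁻¹ = P * (P + Q)⁻¹ := by
  have hQ' := (isUnit_iff_isUnit_det Q).mp hQ
  rw [← mul_nonsing_inv Q hQ', ← add_mul, mul_inv_rev, nonsing_inv_nonsing_inv Q hQ', mul_assoc,
    ← mul_assoc Q⁻¹, nonsing_inv_mul Q hQ', one_mul]

lemma _root_.Commute.kronecker {R l m : Type*} [CommSemiring R] [Fintype l] [Fintype m]
    {A A' : Matrix l l R} {B B' : Matrix m m R} (hA : Commute A A') (hB : Commute B B') :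
    Commute (A ⊗ₖ B) (A' ⊗ₖ B') := by
  rw [Commute, SemiconjBy, ← mul_kronecker_mul, ← mul_kronecker_mul, hA.eq, hB.eq]

lemma kronecker_add_smul_one {R l m : Type*} [CommSemiring R] [DecidableEq l]
    [DecidableEq m] (G : Matrix l l R) (K : Matrix m m R) (a b : R) :
    (G + a • 1) ⊗ₖ (K + b • 1) =
      G ⊗ₖ K + ((b * a) • 1 + a • ((1 : Matrix l l R) ⊗ₖ K) + b • (G ⊗ₖ (1 : Matrix m m R))) := by
  rw [add_kronecker, kronecker_add, kronecker_add, smul_kronecker, smul_kronecker, kronecker_smul,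
    kronecker_smul, one_kronecker_one, smul_smul, mul_comm a b]
  abel

open scoped MatrixOrder ComplexOrder in
lemma PosSemidef.mul_inv_of_commute {𝕜 n : Type*} [RCLike 𝕜] [Fintype n] [DecidableEq n]
    {P Q : Matrix n n 𝕜} (hP : P.PosSemidef) (hQ : Q.PosDef) (h : Commute P Q) :
    (P * Q⁻¹).PosSemidef := by
  have hPQ : Commute P Q⁻¹ := by
    have := h.units_inv_right (u := hQ.isUnit.unit)
    rwa [coe_units_inv, IsUnit.unit_spec] at this
  exact (hPQ.mul_nonneg hP.nonneg hQ.inv.posSemidef.nonneg).posSemidef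

end Matrix

theorem two_step_krr_stmt14_general {m q : ℕ}
    (K : Matrix (Fin m) (Fin m) ℝ) (hK : K.PosDef)
    (G : Matrix (Fin q) (Fin q) ℝ) (hG : G.PosDef)
    (Y : Matrix (Fin m) (Fin q) ℝ) (ld lt : ℝ) (hld : 0 < ld) (hlt : 0 < lt)
    (Ξ : Matrix (Fin q × Fin m) (Fin q × Fin m) ℝ)
    (hΞ : Ξ = (G ⊗ₖ K) *
      ((ld * lt) • 1 + lt • ((1 : Matrix (Fin q) (Fin q) ℝ) ⊗ₖ K)
        + ld • (G ⊗ₖ (1 : Matrix (Fin m) (Fin m) ℝ)))⁻¹)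
    (H : Matrix (Fin q × Fin m) (Fin q × Fin m) ℝ) (hH : H = Ξ * (Ξ + 1)⁻¹) :
    H = (G * (G + lt • 1)⁻¹) ⊗ₖ (K * (K + ld • 1)⁻¹) ∧
    ∀ s : Fin q × Fin m,
      ∀ Ξdel : Matrix {x : Fin q × Fin m // x ≠ s} {x : Fin q × Fin m // x ≠ s} ℝ,
        Ξdel = Ξ.submatrix (fun x => x.val) (fun x => x.val) →
      ∀ ydel : {x : Fin q × Fin m // x ≠ s} → ℝ, ydel = (fun x => vecCols Y x.val) →
      ∀ ξs : {x : Fin q × Fin m // x ≠ s} → ℝ, ξs = (fun x => Ξ s x.val) →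
        ξs ⬝ᵥ ((Ξdel + 1)⁻¹ *ᵥ ydel)
          = ((H *ᵥ vecCols Y) s - H s s * Y s.2 s.1) / (1 - H s s) := by
  set Q : Matrix (Fin q × Fin m) (Fin q × Fin m) ℝ := (ld * lt) • 1
    + lt • ((1 : Matrix (Fin q) (Fin q) ℝ) ⊗ₖ K) + ld • (G ⊗ₖ (1 : Matrix (Fin m) (Fin m) ℝ))
  have hQ : Q.PosDef :=
    ((PosDef.one.smul (mul_pos hld hlt)).add_posSemidef
      ((PosSemidef.one.kronecker hK.posSemidef).smul hlt.le)).add_posSemidef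
      ((hG.posSemidef.kronecker PosSemidef.one).smul hld.le)
  have hcomm : Commute (G ⊗ₖ K) Q :=
    (((Commute.one_right _).smul_right _).add_right
      (((Commute.one_right G).kronecker (Commute.refl K)).smul_right _)).add_right
      (((Commute.refl G).kronecker (Commute.one_right K)).smul_right _)
  have hΞpos : Ξ.PosSemidef := hΞ ▸ (hG.kronecker hK).posSemidef.mul_inv_of_commute hQ hcomm
  have hA : (Ξ + 1).PosDef := PosDef.posSemidef_add hΞpos PosDef.one
  refine ⟨?_, ?_⟩
  · rw [hH, hΞ, mul_inv_mul_mul_inv_add_one_inv hQ.isUnit, ← kronecker_add_smul_one,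
      inv_kronecker, ← mul_kronecker_mul]
  · rintro s _ rfl _ rfl _ rfl
    have hAs := (hA.submatrix (Subtype.val_injective (p := (· ≠ s)))).isUnit
    rw [← deleteRowCol, deleteRowCol_add_one] at hAs
    exact hH ▸ krr_leave_one_out Ξ hA.isUnit hAs (vecCols Y)

/-- leave-one-dyad-out shortcut for two-step KRR, Setting A:
with `Ξ = (G ⊗ K)(λ_dλ_t I + λ_t(I ⊗ K) + λ_d(G ⊗ I))⁻¹` and `H^{TS} = Ξ(Ξ + I)⁻¹`,
one has `H^{TS} = (G(G+λ_t I)⁻¹) ⊗ (K(K+λ_d I)⁻¹)`, and for every dyad `s = (j, i)`,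
KRR with pairwise kernel matrix `Ξ` and regularization `1` trained on the other
`mq − 1` dyads predicts `(H^{TS}_{s·} vec(Y) − H^{TS}_{ss} Y_{ij}) / (1 − H^{TS}_{ss})`
at dyad `s`. -/
theorem two_step_krr_stmt14 {m q : ℕ} (hmq : 2 ≤ m * q)
    (K : Matrix (Fin m) (Fin m) ℝ) (hK : K.PosDef)
    (G : Matrix (Fin q) (Fin q) ℝ) (hG : G.PosDef)
    (Y : Matrix (Fin m) (Fin q) ℝ) (ld lt : ℝ) (hld : 0 < ld) (hlt : 0 < lt)
    (Ξ : Matrix (Fin q × Fin m) (Fin q × Fin m) ℝ)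
    (hΞ : Ξ = (G ⊗ₖ K) *
      ((ld * lt) • 1 + lt • ((1 : Matrix (Fin q) (Fin q) ℝ) ⊗ₖ K)
        + ld • (G ⊗ₖ (1 : Matrix (Fin m) (Fin m) ℝ)))⁻¹)
    (H : Matrix (Fin q × Fin m) (Fin q × Fin m) ℝ) (hH : H = Ξ * (Ξ + 1)⁻¹) :
    H = (G * (G + lt • 1)⁻¹) ⊗ₖ (K * (K + ld • 1)⁻¹) ∧
    ∀ s : Fin q × Fin m,
      ∀ Ξdel : Matrix {x : Fin q × Fin m // x ≠ s} {x : Fin q × Fin m // x ≠ s} ℝ,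
        Ξdel = Ξ.submatrix (fun x => x.val) (fun x => x.val) →
      ∀ ydel : {x : Fin q × Fin m // x ≠ s} → ℝ, ydel = (fun x => vecCols Y x.val) →
      ∀ ξs : {x : Fin q × Fin m // x ≠ s} → ℝ, ξs = (fun x => Ξ s x.val) →
        ξs ⬝ᵥ ((Ξdel + 1)⁻¹ *ᵥ ydel)
          = ((H *ᵥ vecCols Y) s - H s s * Y s.2 s.1) / (1 - H s s) :=
  two_step_krr_stmt14_general K hK G hG Y ld lt hld hlt Ξ hΞ H hH
end

section
/- (Leave-one-task-out shortcut for two-step kernel ridge regression, Setting C.) Let q ≥ 2, let K be an m×m and G a q×q symmetric positive semidefinite real matrix, Y ∈ ℝ^{m×q}, λ_d, λ_t > 0, H^k = K(K + λ_d I)⁻¹, and H^g = G(G + λ_t I)⁻¹. Fix a task index j; let G^{(j)} be G with row j and column j deleted, Y^{(·,j)} be Y with column j deleted, and γ_j ∈ ℝ^{q−1} be the j-th column of G with its j-th entry deleted. Then H^k Y^{(·,j)} (G^{(j)} + λ_t I)⁻¹ γ_j = H^k (Y H^g_{·j} − Y_{·j} H^g_{jj}) / (1 − H^g_{jj}), where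 H^g_{·j} denotes the j-th column of H^g and Y_{·j} the j-th column of Y. -/
/-!
Put `A = G + λ_t I` and `B = A⁻¹`. The rows `x ≠ j` of `A B_{·j} = e_j` say that
`w = -B_{·j} / B_{jj}`, with its `j`-th entry dropped, solves `A^{(j)} w = γ_j`, because `A` and `G`
agree off the diagonal; and `B_{jj} > 0` since `B` is positive definite. As `H^g = I - λ_t B`,
`1 - H^g_{jj} = λ_t B_{jj}` and `Y H^g_{·j} - Y_{·j} H^g_{jj} = λ_t (B_{jj} Y_{·j} - Y B_{·j})`,
so the right-hand side is `H^k` applied to `Y^{(·,j)} w = Y_{·j} - Y B_{·j} / B_{jj}`.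
-/

open Matrix

namespace Matrix

variable {m n α : Type*} [Fintype n] [DecidableEq n] [Field α]

lemma submatrix_id_ne_mulVec (Y : Matrix m n α) (v : n → α) (j : n) :
    Y.submatrix id (Subtype.val : {x // x ≠ j} → n) *ᵥ (fun x => v x)
      = fun r => (Y *ᵥ v) r - v j * Y r j := by
  funext r
  simp only [mulVec, dotProduct, submatrix_apply, id_eq, Fintype.sum_eq_add_sum_subtype_ne _ j]
  ring

lemma submatrix_ne_mulVec_inv_col {A : Matrix n n α} (hA : IsUnit A.det) {j : n}
    (hj : A⁻¹ j j ≠ 0) :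
    A.submatrix (Subtype.val : {x // x ≠ j} → n) (Subtype.val : {x // x ≠ j} → n)
        *ᵥ (fun x : {x // x ≠ j} => -A⁻¹ x j / A⁻¹ j j)
      = fun x : {x // x ≠ j} => A x j := by
  funext x
  have hxj : (A * A⁻¹) x j = 0 := by rw [mul_nonsing_inv A hA, one_apply_ne x.2]
  rw [mul_apply, Fintype.sum_eq_add_sum_subtype_ne _ j] at hxj
  simp only [mulVec, dotProduct, submatrix_apply, mul_div_assoc', mul_neg, neg_div,
    Finset.sum_neg_distrib, ← Finset.sum_div]
  field_simp
  linear_combination -hxj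

lemma inv_submatrix_ne_mulVec_col {A : Matrix n n α} (hA : IsUnit A.det) {j : n}
    (hA' : IsUnit (A.submatrix (Subtype.val : {x // x ≠ j} → n)
      (Subtype.val : {x // x ≠ j} → n)).det)
    (hj : A⁻¹ j j ≠ 0) :
    (A.submatrix (Subtype.val : {x // x ≠ j} → n) (Subtype.val : {x // x ≠ j} → n))⁻¹
        *ᵥ (fun x : {x // x ≠ j} => A x j)
      = fun x : {x // x ≠ j} => -A⁻¹ x j / A⁻¹ j j := by
  rw [← submatrix_ne_mulVec_inv_col hA hj, mulVec_mulVec, nonsing_inv_mul _ hA', one_mulVec]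

lemma mul_add_smul_one_inv {A : Matrix n n α} {c : α} (hA : IsUnit (A + c • 1).det) :
    A * (A + c • 1)⁻¹ = 1 - c • (A + c • 1)⁻¹ := by
  calc A * (A + c • 1)⁻¹ = (A + c • 1 - c • 1) * (A + c • 1)⁻¹ := by rw [add_sub_cancel_right]
    _ = 1 - c • (A + c • 1)⁻¹ := by rw [sub_mul, mul_nonsing_inv _ hA, smul_mul, one_mul]

lemma submatrix_id_ne_mulVec_neg_col_div (Y : Matrix m n α) {B H : Matrix n n α} {c : α}
    (hH : H = 1 - c • B) (hc : c ≠ 0) {j : n} (hj : B j j ≠ 0) :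
    Y.submatrix id (Subtype.val : {x // x ≠ j} → n) *ᵥ (fun x => -B x j / B j j)
      = (1 - H j j)⁻¹ • fun r => (Y * H) r j - Y r j * H j j := by
  rw [submatrix_id_ne_mulVec Y (fun x => -B x j / B j j)]
  funext r
  have hYB : (Y *ᵥ fun x => -B x j / B j j) r = -(Y * B) r j / B j j := by
    simp only [mulVec, dotProduct, mul_apply, neg_div, mul_neg, Finset.sum_neg_distrib,
      mul_div_assoc', Finset.sum_div]
  simp only [hYB, hH, Matrix.mul_sub, Matrix.mul_one, Matrix.mul_smul, Matrix.sub_apply,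
    Matrix.smul_apply, Matrix.one_apply_eq, smul_eq_mul, Pi.smul_apply]
  field_simp
  ring

end Matrix

theorem two_step_krr_stmt16_general {m q : ℕ}
    (G : Matrix (Fin q) (Fin q) ℝ) (hG : G.PosSemidef)
    (Y : Matrix (Fin m) (Fin q) ℝ) (lt : ℝ) (hlt : 0 < lt)
    (j : Fin q)
    (Hk : Matrix (Fin m) (Fin m) ℝ)
    (Hg : Matrix (Fin q) (Fin q) ℝ) (hHg : Hg = G * (G + lt • 1)⁻¹)
    (Gdel : Matrix {x : Fin q // x ≠ j} {x : Fin q // x ≠ j} ℝ)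
    (hGdel : Gdel = G.submatrix (fun x => x.val) (fun x => x.val))
    (Ydel : Matrix (Fin m) {x : Fin q // x ≠ j} ℝ)
    (hYdel : Ydel = Y.submatrix id (fun x => x.val))
    (γ : {x : Fin q // x ≠ j} → ℝ) (hγ : γ = fun x => G x.val j) :
    Hk *ᵥ ((Ydel * (Gdel + lt • 1)⁻¹) *ᵥ γ)
      = fun i => (Hk *ᵥ (fun r => (Y * Hg) r j - Y r j * Hg j j)) i / (1 - Hg j j) := by
  set A := G + lt • 1
  have hA : A.PosDef := PosDef.posSemidef_add hG (PosDef.one.smul hlt)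
  have hBjj : A⁻¹ j j ≠ 0 := hA.inv.diag_pos.ne'
  have hdet : IsUnit A.det := (isUnit_iff_isUnit_det A).mp hA.isUnit
  have hdel : IsUnit (A.submatrix (Subtype.val : {x // x ≠ j} → Fin q) Subtype.val).det :=
    (isUnit_iff_isUnit_det _).mp (hA.submatrix Subtype.val_injective).isUnit
  have hGdel' : Gdel + lt • 1 = A.submatrix Subtype.val Subtype.val := by
    simp [hGdel, A, submatrix_add, submatrix_smul, submatrix_one _ Subtype.val_injective]
  have hγ' : γ = fun x : {x // x ≠ j} => A x j := by
    funext x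
    simp [hγ, A, one_apply_ne x.2]
  rw [← mulVec_mulVec, hGdel', hγ', inv_submatrix_ne_mulVec_col hdet hdel hBjj,
    hYdel, submatrix_id_ne_mulVec_neg_col_div Y (hHg.trans (mul_add_smul_one_inv hdet)) hlt.ne' hBjj,
    mulVec_smul]
  funext i
  simp [div_eq_inv_mul]

/-- leave-one-task-out shortcut for two-step KRR, Setting C:
training the two-step model on the `q−1` tasks other than `j` and predicting
at task `j` across all `m` instances gives
`H^k (Y H^g_{·j} − Y_{·j} H^g_{jj}) / (1 − H^g_{jj})`. -/
theorem two_step_krr_stmt16 {m q : ℕ} (hq : 2 ≤ q)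
    (K : Matrix (Fin m) (Fin m) ℝ) (hK : K.PosSemidef)
    (G : Matrix (Fin q) (Fin q) ℝ) (hG : G.PosSemidef)
    (Y : Matrix (Fin m) (Fin q) ℝ) (ld lt : ℝ) (hld : 0 < ld) (hlt : 0 < lt)
    (j : Fin q)
    (Hk : Matrix (Fin m) (Fin m) ℝ) (hHk : Hk = K * (K + ld • 1)⁻¹)
    (Hg : Matrix (Fin q) (Fin q) ℝ) (hHg : Hg = G * (G + lt • 1)⁻¹)
    (Gdel : Matrix {x : Fin q // x ≠ j} {x : Fin q // x ≠ j} ℝ)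
    (hGdel : Gdel = G.submatrix (fun x => x.val) (fun x => x.val))
    (Ydel : Matrix (Fin m) {x : Fin q // x ≠ j} ℝ)
    (hYdel : Ydel = Y.submatrix id (fun x => x.val))
    (γ : {x : Fin q // x ≠ j} → ℝ) (hγ : γ = fun x => G x.val j) :
    Hk *ᵥ ((Ydel * (Gdel + lt • 1)⁻¹) *ᵥ γ)
      = fun i => (Hk *ᵥ (fun r => (Y * Hg) r j - Y r j * Hg j j)) i / (1 - Hg j j) :=
  two_step_krr_stmt16_general G hG Y lt hlt j Hk Hg hHg Gdel hGdel Ydel hYdel γ hγ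
end

section
/- (Leave-out shortcut for Setting D of two-step kernel ridge regression.) Let m, q ≥ 2, let K be an m×m and G a q×q symmetric positive semidefinite real matrix, Y ∈ ℝ^{m×q}, λ_d, λ_t > 0, H^k = K(K + λ_d I)⁻¹, and H^g = G(G + λ_t I)⁻¹. Fix indices i and j. Let K^{(i)} be K with row and column i deleted, κ_i the i-th row of K with entry i deleted, G^{(j)} be G with row and column j deleted, γ_j the j-th column of G with entry j deleted, and Y^{(i,j)} be Y with row i and column j deleted. Then κ_iᵀ (K^{(i)} + λ_d I)⁻¹ Y^{(i,j)} (G^{(j)} + λ_t I)⁻¹ γ_j = [ H^k_{i·}(Y H^g_{·j} − Y_{·j} H^g_{jj}) − H^k_{ii}(Y_{i·} H^g_{·j} − Y_{ij} H^g_{jj}) ] / [ (1 − H^k_{ii})(1 − H^g_{jj}) ]. -/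
/-!
Both factors are handled by one leave-one-out identity. If `A` and its principal submatrix `B`
without row and column `i` are invertible and `a` is row `i` of `A` off the diagonal, block
elimination in `A u = v` gives `a B⁻¹ v₋ᵢ = vᵢ - (A⁻¹ v)ᵢ / (A⁻¹)ᵢᵢ`, because the Schur complement
`Aᵢᵢ - a B⁻¹ a'` equals `1 / (A⁻¹)ᵢᵢ`. For `A = K + λ I` the hat matrix is `1 - λ A⁻¹`, which turns
this into `((H v)ᵢ - Hᵢᵢ vᵢ) / (1 - Hᵢᵢ)`. Applied on the `G` side to every row of `Y`, and then on
the `K` side to the resulting vector, this yields the formula.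
-/

open Matrix

namespace Matrix

variable {𝕜 n : Type*} [Field 𝕜] [Fintype n] [DecidableEq n] (A : Matrix n n 𝕜) (i : n)

noncomputable def pivotSchurComplement : 𝕜 :=
  A i i - (fun y : {y // y ≠ i} => A i y) ⬝ᵥ
    ((A.submatrix (↑) (↑) : Matrix {y // y ≠ i} {y // y ≠ i} 𝕜)⁻¹ *ᵥ fun y => A y i)

lemma mulVec_subtype_ne_eq (w : n → 𝕜) :
    (fun x : {x // x ≠ i} => (A *ᵥ w) x)
      = A.submatrix (↑) (↑) *ᵥ (fun y : {y // y ≠ i} => w y)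
        + w i • fun x : {x // x ≠ i} => A x i := by
  ext x
  rw [mulVec, dotProduct, Fintype.sum_eq_add_sum_subtype_ne _ i]
  simp only [Pi.add_apply, Pi.smul_apply, smul_eq_mul, mulVec, dotProduct, submatrix_apply]
  ring

lemma mulVec_apply_eq_add_dotProduct_ne (w : n → 𝕜) :
    (A *ᵥ w) i = A i i * w i + (fun y : {y // y ≠ i} => A i y) ⬝ᵥ fun y => w y :=
  Fintype.sum_eq_add_sum_subtype_ne _ i

variable {A i}

lemma dotProduct_inv_submatrix_ne_mulVec_mulVec
    (hB : IsUnit (A.submatrix (↑) (↑) : Matrix {y // y ≠ i} {y // y ≠ i} 𝕜).det) (w : n → 𝕜) :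
    (fun y : {y // y ≠ i} => A i y) ⬝ᵥ
        ((A.submatrix (↑) (↑))⁻¹ *ᵥ fun x : {x // x ≠ i} => (A *ᵥ w) x)
      = (A *ᵥ w) i - w i * pivotSchurComplement A i := by
  rw [mulVec_subtype_ne_eq, mulVec_add, mulVec_smul, mulVec_mulVec, nonsing_inv_mul _ hB,
    one_mulVec, dotProduct_add, dotProduct_smul, mulVec_apply_eq_add_dotProduct_ne,
    pivotSchurComplement, smul_eq_mul]
  ring

lemma inv_apply_self_mul_pivotSchurComplement (hA : IsUnit A.det)
    (hB : IsUnit (A.submatrix (↑) (↑) : Matrix {y // y ≠ i} {y // y ≠ i} 𝕜).det) :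
    A⁻¹ i i * pivotSchurComplement A i = 1 := by
  have h := dotProduct_inv_submatrix_ne_mulVec_mulVec hB (A⁻¹ *ᵥ Pi.single i 1)
  rw [mulVec_mulVec, mul_nonsing_inv _ hA, one_mulVec, mulVec_single_one] at h
  have hzero : (fun x : {x // x ≠ i} => (Pi.single i 1 : n → 𝕜) x) = 0 := by
    ext x
    exact Pi.single_eq_of_ne x.2 _
  rw [hzero, mulVec_zero, dotProduct_zero, Pi.single_eq_same] at h
  exact (sub_eq_zero.mp h.symm).symm

theorem dotProduct_inv_submatrix_ne_mulVec (hA : IsUnit A.det)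
    (hB : IsUnit (A.submatrix (↑) (↑) : Matrix {y // y ≠ i} {y // y ≠ i} 𝕜).det) (v : n → 𝕜) :
    (fun y : {y // y ≠ i} => A i y) ⬝ᵥ
        ((A.submatrix (↑) (↑) : Matrix {y // y ≠ i} {y // y ≠ i} 𝕜)⁻¹ *ᵥ fun y => v y)
      = v i - (A⁻¹ *ᵥ v) i / A⁻¹ i i := by
  have hc := inv_apply_self_mul_pivotSchurComplement hA hB
  have h := dotProduct_inv_submatrix_ne_mulVec_mulVec hB (A⁻¹ *ᵥ v)
  rw [mulVec_mulVec, mul_nonsing_inv _ hA, one_mulVec] at h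
  rw [h, eq_inv_of_mul_eq_one_right hc, div_eq_mul_inv]

theorem dotProduct_inv_submatrix_ne_mulVec_col (hA : IsUnit A.det)
    (hB : IsUnit (A.submatrix (↑) (↑) : Matrix {y // y ≠ i} {y // y ≠ i} 𝕜).det) (v : n → 𝕜) :
    (fun y : {y // y ≠ i} => v y) ⬝ᵥ
        ((A.submatrix (↑) (↑) : Matrix {y // y ≠ i} {y // y ≠ i} 𝕜)⁻¹ *ᵥ fun y => A y i)
      = v i - (v ᵥ* A⁻¹) i / A⁻¹ i i := by
  have h := dotProduct_inv_submatrix_ne_mulVec (A := Aᵀ) (i := i) (isUnit_det_transpose _ hA)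
    (by rwa [← transpose_submatrix, det_transpose]) v
  rwa [← transpose_submatrix, ← transpose_nonsing_inv, ← transpose_nonsing_inv, mulVec_transpose,
    transpose_apply, dotProduct_comm, ← dotProduct_mulVec, mulVec_transpose] at h

end Matrix

/-- With `c = (K + l • 1)⁻¹ i i`, the hat matrix `1 - l • (K + l • 1)⁻¹` has diagonal entry
`1 - l * c`. -/
lemma sub_div_eq_hat_form {𝕜 : Type*} [Field 𝕜] {l c u v : 𝕜} (hl : l ≠ 0) (hc : c ≠ 0) :
    v - u / c = ((v - l * u) - (1 - l * c) * v) / (1 - (1 - l * c)) := by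
  field_simp
  ring

namespace Matrix.PosSemidef

variable {n : Type*} [DecidableEq n] {K : Matrix n n ℝ} {l : ℝ}

lemma posDef_add_smul_one_s17 (hK : K.PosSemidef) (hl : 0 < l) : (K + l • 1).PosDef :=
  PosDef.posSemidef_add hK (PosDef.one.smul hl)

lemma submatrix_add_smul_one (i : n) :
    ((K + l • 1).submatrix (↑) (↑) : Matrix {y // y ≠ i} {y // y ≠ i} ℝ)
      = K.submatrix (↑) (↑) + l • 1 := by
  ext x y
  simp [one_apply, Subtype.ext_iff]

variable [Fintype n]

lemma mul_inv_add_smul_one (hK : K.PosSemidef) (hl : 0 < l) :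
    K * (K + l • 1)⁻¹ = 1 - l • (K + l • 1)⁻¹ := by
  have h := mul_nonsing_inv _ ((hK.posDef_add_smul_one_s17 hl).det_pos.ne'.isUnit)
  rwa [add_mul, smul_one_mul, ← eq_sub_iff_add_eq] at h

theorem dotProduct_inv_submatrix_add_smul_one_mulVec (hK : K.PosSemidef) (hl : 0 < l) (i : n)
    (v : n → ℝ) :
    (fun y : {y // y ≠ i} => K i y) ⬝ᵥ
        ((K.submatrix (↑) (↑) + l • 1 : Matrix {y // y ≠ i} {y // y ≠ i} ℝ)⁻¹ *ᵥ fun y => v y)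
      = (((K * (K + l • 1)⁻¹) *ᵥ v) i - (K * (K + l • 1)⁻¹) i i * v i)
          / (1 - (K * (K + l • 1)⁻¹) i i) := by
  have hA := hK.posDef_add_smul_one_s17 hl
  have hrow : (fun y : {y // y ≠ i} => K i y) = fun y : {y // y ≠ i} => (K + l • 1) i y := by
    ext y
    simp [one_apply_ne' y.2]
  rw [hrow, ← submatrix_add_smul_one,
    dotProduct_inv_submatrix_ne_mulVec hA.det_pos.ne'.isUnit
      (hA.submatrix Subtype.val_injective).det_pos.ne'.isUnit,
    mul_inv_add_smul_one hK hl, sub_mulVec, one_mulVec, smul_mulVec]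
  simpa using sub_div_eq_hat_form hl.ne' hA.inv.diag_pos.ne'

theorem dotProduct_inv_submatrix_add_smul_one_mulVec_col (hK : K.PosSemidef) (hl : 0 < l) (i : n)
    (v : n → ℝ) :
    (fun y : {y // y ≠ i} => v y) ⬝ᵥ
        ((K.submatrix (↑) (↑) + l • 1 : Matrix {y // y ≠ i} {y // y ≠ i} ℝ)⁻¹ *ᵥ fun y => K y i)
      = ((v ᵥ* (K * (K + l • 1)⁻¹)) i - v i * (K * (K + l • 1)⁻¹) i i)
          / (1 - (K * (K + l • 1)⁻¹) i i) := by
  have hA := hK.posDef_add_smul_one_s17 hl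
  have hcol : (fun y : {y // y ≠ i} => K y i) = fun y : {y // y ≠ i} => (K + l • 1) y i := by
    ext y
    simp [one_apply_ne y.2]
  rw [hcol, ← submatrix_add_smul_one,
    dotProduct_inv_submatrix_ne_mulVec_col hA.det_pos.ne'.isUnit
      (hA.submatrix Subtype.val_injective).det_pos.ne'.isUnit,
    mul_inv_add_smul_one hK hl, vecMul_sub, vecMul_one, vecMul_smul]
  simpa [mul_comm] using sub_div_eq_hat_form hl.ne' hA.inv.diag_pos.ne'

end Matrix.PosSemidef

theorem two_step_krr_stmt17_general {m q : ℕ}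
    (K : Matrix (Fin m) (Fin m) ℝ) (hK : K.PosSemidef)
    (G : Matrix (Fin q) (Fin q) ℝ) (hG : G.PosSemidef)
    (Y : Matrix (Fin m) (Fin q) ℝ) (ld lt : ℝ) (hld : 0 < ld) (hlt : 0 < lt)
    (i : Fin m) (j : Fin q)
    (Hk : Matrix (Fin m) (Fin m) ℝ) (hHk : Hk = K * (K + ld • 1)⁻¹)
    (Hg : Matrix (Fin q) (Fin q) ℝ) (hHg : Hg = G * (G + lt • 1)⁻¹)
    (Kdel : Matrix {x : Fin m // x ≠ i} {x : Fin m // x ≠ i} ℝ)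
    (hKdel : Kdel = K.submatrix (fun x => x.val) (fun x => x.val))
    (Gdel : Matrix {x : Fin q // x ≠ j} {x : Fin q // x ≠ j} ℝ)
    (hGdel : Gdel = G.submatrix (fun x => x.val) (fun x => x.val))
    (Ydel : Matrix {x : Fin m // x ≠ i} {x : Fin q // x ≠ j} ℝ)
    (hYdel : Ydel = Y.submatrix (fun x => x.val) (fun x => x.val))
    (κ : {x : Fin m // x ≠ i} → ℝ) (hκ : κ = fun x => K i x.val)
    (γ : {x : Fin q // x ≠ j} → ℝ) (hγ : γ = fun x => G x.val j) :
    κ ⬝ᵥ (((Kdel + ld • 1)⁻¹ * Ydel * (Gdel + lt • 1)⁻¹) *ᵥ γ)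
      = ((Hk * Y * Hg) i j - (Hk * Y) i j * Hg j j
          - Hk i i * ((Y * Hg) i j - Y i j * Hg j j))
        / ((1 - Hk i i) * (1 - Hg j j)) := by
  subst hKdel hGdel hYdel hκ hγ
  set W : Fin m → ℝ := fun x => ((Y * Hg) x j - Y x j * Hg j j) / (1 - Hg j j) with hW
  have hGside : (Y.submatrix (↑) (↑) : Matrix {x // x ≠ i} {y // y ≠ j} ℝ) *ᵥ
      ((G.submatrix (↑) (↑) + lt • 1 : Matrix {y // y ≠ j} {y // y ≠ j} ℝ)⁻¹ *ᵥ fun y => G y j)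
        = fun x : {x // x ≠ i} => W x := by
    ext x
    rw [hW, hHg]
    exact hG.dotProduct_inv_submatrix_add_smul_one_mulVec_col hlt j (Y x)
  have hHkW : (Hk *ᵥ W) i = ((Hk * Y * Hg) i j - (Hk * Y) i j * Hg j j) / (1 - Hg j j) := by
    rw [mulVec, dotProduct, Matrix.mul_assoc Hk Y Hg, mul_apply, mul_apply, Finset.sum_mul,
      ← Finset.sum_sub_distrib, Finset.sum_div]
    refine Finset.sum_congr rfl fun x _ => ?_
    rw [hW]
    ring
  rw [← mulVec_mulVec, ← mulVec_mulVec, hGside,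
    hK.dotProduct_inv_submatrix_add_smul_one_mulVec hld i W, ← hHk, hHkW]
  simp only [hW]
  rw [← mul_div_assoc, ← sub_div, div_div, mul_comm (1 - Hg j j)]

/-- leave-out shortcut for Setting D of two-step KRR: holding out
dyad `(i,j)` together with row `i` and column `j` of `Y` and predicting at `(i,j)`
gives `[H^k_{i·}(Y H^g_{·j} − Y_{·j} H^g_{jj}) − H^k_{ii}(Y_{i·} H^g_{·j} − Y_{ij} H^g_{jj})]
/ [(1 − H^k_{ii})(1 − H^g_{jj})]`. -/
theorem two_step_krr_stmt17 {m q : ℕ} (hm : 2 ≤ m) (hq : 2 ≤ q)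
    (K : Matrix (Fin m) (Fin m) ℝ) (hK : K.PosSemidef)
    (G : Matrix (Fin q) (Fin q) ℝ) (hG : G.PosSemidef)
    (Y : Matrix (Fin m) (Fin q) ℝ) (ld lt : ℝ) (hld : 0 < ld) (hlt : 0 < lt)
    (i : Fin m) (j : Fin q)
    (Hk : Matrix (Fin m) (Fin m) ℝ) (hHk : Hk = K * (K + ld • 1)⁻¹)
    (Hg : Matrix (Fin q) (Fin q) ℝ) (hHg : Hg = G * (G + lt • 1)⁻¹)
    (Kdel : Matrix {x : Fin m // x ≠ i} {x : Fin m // x ≠ i} ℝ)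
    (hKdel : Kdel = K.submatrix (fun x => x.val) (fun x => x.val))
    (Gdel : Matrix {x : Fin q // x ≠ j} {x : Fin q // x ≠ j} ℝ)
    (hGdel : Gdel = G.submatrix (fun x => x.val) (fun x => x.val))
    (Ydel : Matrix {x : Fin m // x ≠ i} {x : Fin q // x ≠ j} ℝ)
    (hYdel : Ydel = Y.submatrix (fun x => x.val) (fun x => x.val))
    (κ : {x : Fin m // x ≠ i} → ℝ) (hκ : κ = fun x => K i x.val)
    (γ : {x : Fin q // x ≠ j} → ℝ) (hγ : γ = fun x => G x.val j) :
    κ ⬝ᵥ (((Kdel + ld • 1)⁻¹ * Ydel * (Gdel + lt • 1)⁻¹) *ᵥ γ)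
      = ((Hk * Y * Hg) i j - (Hk * Y) i j * Hg j j
          - Hk i i * ((Y * Hg) i j - Y i j * Hg j j))
        / ((1 - Hk i i) * (1 - Hg j j)) :=
  two_step_krr_stmt17_general K hK G hG Y ld lt hld hlt i j Hk hHk Hg hHg Kdel hKdel Gdel hGdel Ydel
    hYdel κ hκ γ hγ
end
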